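/- arXiv:2510.07710 — 4 statements merged into one kernel-verified Lean document; each statement's English description precedes it below -/
import Mathlib

section
/- Let G, F : ℝ → ℝ with F differentiable on [a,b], G/F' monotone on [a,b], and F'(x)/G(x) ≥ m > 0 for all x in [a,b]. Then |∫_a^b G(x) e^{i F(x)} dx| ≤ 4/m. -/
open Real Complex Set intervalIntegral

section TitchmarshAux

open MeasureTheory Function

lemma smul_integrableOn {g : ℝ → ℂ} {s : Set ℝ} {μ : Measure ℝ} (hg : IntegrableOn g s μ)
    {h : ℝ → ℝ} (hh : AEStronglyMeasurable h (μ.restrict s)) {c : ℝ}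
    (hc : ∀ᵐ x ∂(μ.restrict s), |h x| ≤ c) :
    IntegrableOn (fun x => h x • g x) s μ := by
  refine Integrable.mono' (hg.norm.const_mul c) (hh.smul hg.1) ?_
  filter_upwards [hc] with x hx
  rw [norm_smul, Real.norm_eq_abs]
  exact mul_le_mul_of_nonneg_right hx (norm_nonneg _)

lemma key_bonnet (a b C : ℝ) (hab : a ≤ b) (ψ : ℝ → ℝ) (hψ : Monotone ψ)
    (g : ℝ → ℂ) (hg : IntegrableOn g (Set.Ioc a b))
    (hbd : ∀ t ∈ Set.Icc a b, ‖∫ x in t..b, g x‖ ≤ C) :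
    ‖∫ x in a..b, ψ x • g x‖ ≤
      (|rightLim ψ a| + (rightLim ψ b - rightLim ψ a)) * C := by
  set S := hψ.stieltjesFunction with hSdef
  set μ := S.measure with hμ
  have hSrl : ∀ x, S x = rightLim ψ x := fun x => hψ.stieltjesFunction_eq x
  have hμIoc : ∀ x y : ℝ, μ (Set.Ioc x y) = ENNReal.ofReal (S y - S x) := fun x y =>
    S.measure_Ioc x y
  -- a.e. equality of ψ and S
  have haeS : ∀ᵐ x ∂(volume : Measure ℝ), ψ x = S x := by
    have hcnt : (volume : Measure ℝ) {x | ¬ContinuousAt ψ x} = 0 :=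
      (hψ.countable_not_continuousAt).measure_zero _
    rw [MeasureTheory.ae_iff]
    refine measure_mono_null ?_ hcnt
    intro x hx
    simp only [Set.mem_setOf_eq] at hx ⊢
    intro hcont
    exact hx ((hψ.continuousWithinAt_Ioi_iff_rightLim_eq.mp hcont.continuousWithinAt).symm ▸
      (hψ.stieltjesFunction_eq x).symm ▸ rfl)
  have hfin : μ (Set.Ioc a b) ≠ ⊤ := by rw [hμIoc]; exact ENNReal.ofReal_ne_top
  haveI hFin : IsFiniteMeasure (μ.restrict (Set.Ioc a b)) :=
    ⟨by rw [Measure.restrict_apply_univ]; exact lt_of_le_of_ne le_top hfin⟩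
  have hk_mono : Monotone (fun x => (μ (Set.Ioc a x)).toReal) := by
    intro x y hxy
    exact ENNReal.toReal_mono (by rw [hμIoc]; exact ENNReal.ofReal_ne_top)
      (measure_mono (Set.Ioc_subset_Ioc_right hxy))
  have hint1 : IntegrableOn (fun x => S a • g x) (Set.Ioc a b) := hg.smul (S a)
  have hint2 : IntegrableOn (fun x => (μ (Set.Ioc a x)).toReal • g x) (Set.Ioc a b) := by
    refine smul_integrableOn hg hk_mono.measurable.aestronglyMeasurable
      (c := (μ (Set.Ioc a b)).toReal) ?_
    filter_upwards [ae_restrict_mem measurableSet_Ioc] with x hx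
    rw [_root_.abs_of_nonneg ENNReal.toReal_nonneg]
    exact hk_mono hx.2
  -- decompose the integral
  have e1 : ∫ x in a..b, ψ x • g x
      = S a • (∫ x in a..b, g x) + ∫ x in Set.Ioc a b, (μ (Set.Ioc a x)).toReal • g x := by
    rw [intervalIntegral.integral_of_le hab, intervalIntegral.integral_of_le hab]
    have e2 : ∫ x in Set.Ioc a b, ψ x • g x = ∫ x in Set.Ioc a b, S x • g x :=
      integral_congr_ae (by
        filter_upwards [ae_restrict_of_ae haeS] with x hx; rw [hx])
    rw [e2, ← MeasureTheory.integral_smul, ← integral_add hint1 hint2]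
    refine setIntegral_congr_fun measurableSet_Ioc (fun x hx => ?_)
    have : S x = S a + (μ (Set.Ioc a x)).toReal := by
      rw [hμIoc, ENNReal.toReal_ofReal (sub_nonneg.mpr (S.mono hx.1.le))]; ring
    rw [this, add_smul]
  -- Fubini for the second term
  set f : ℝ → ℝ → ℂ := fun x t => (Set.Ioc a x).indicator (fun _ => (1:ℝ)) t • g x with hfdef
  have huf : (Function.uncurry f)
      = Set.indicator {p : ℝ × ℝ | a < p.2 ∧ p.2 ≤ p.1} (fun p => g p.1) := by
    funext p
    rcases p with ⟨x, t⟩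
    simp only [Function.uncurry, hfdef, Set.indicator_apply, Set.mem_Ioc, Set.mem_setOf_eq,
      ite_smul, one_smul, zero_smul]
  have hms : MeasurableSet {p : ℝ × ℝ | a < p.2 ∧ p.2 ≤ p.1} := by
    have : {p : ℝ × ℝ | a < p.2 ∧ p.2 ≤ p.1}
        = {p : ℝ × ℝ | a < p.2} ∩ {p : ℝ × ℝ | p.2 ≤ p.1} := rfl
    rw [this]
    exact (measurableSet_lt measurable_const measurable_snd).inter
      (measurableSet_le measurable_snd measurable_fst)
  have hufm : AEStronglyMeasurable (Function.uncurry f)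
      ((volume.restrict (Set.Ioc a b)).prod (μ.restrict (Set.Ioc a b))) := by
    rw [huf]
    exact ((hg.1.aemeasurable.comp_fst).aestronglyMeasurable).indicator hms
  have hFub : Integrable (Function.uncurry f)
      ((volume.restrict (Set.Ioc a b)).prod (μ.restrict (Set.Ioc a b))) := by
    rw [integrable_prod_iff hufm]
    constructor
    · refine Filter.Eventually.of_forall (fun x => ?_)
      show Integrable (fun t => f x t) _
      have : (fun t => f x t) = Set.indicator (Set.Ioc a x) (fun _ => g x) := by
        funext t
        simp only [hfdef, Set.indicator_apply, ite_smul, one_smul, zero_smul]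
      rw [this]
      exact (integrable_const (g x)).indicator measurableSet_Ioc
    · refine Integrable.mono' (hg.norm.const_mul ((μ (Set.Ioc a b)).toReal))
        hufm.norm.integral_prod_right' (Filter.Eventually.of_forall (fun x => ?_))
      have h1 : ∀ t, ‖f x t‖ ≤ ‖g x‖ := by
        intro t
        rw [norm_smul, Real.norm_eq_abs]
        by_cases ht : t ∈ Set.Ioc a x
        · simp [Set.indicator_of_mem ht]
        · simp [Set.indicator_of_notMem ht, norm_nonneg]
      have h2 : ∫ t, ‖f x t‖ ∂(μ.restrict (Set.Ioc a b)) ≤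
          ∫ _t, ‖g x‖ ∂(μ.restrict (Set.Ioc a b)) := by
        refine integral_mono_of_nonneg (Filter.Eventually.of_forall (fun t => norm_nonneg _))
          (integrable_const _) (Filter.Eventually.of_forall h1)
      show ‖∫ t in Set.Ioc a b, ‖f x t‖ ∂μ‖ ≤ (μ (Set.Ioc a b)).toReal * ‖g x‖
      rw [Real.norm_eq_abs, _root_.abs_of_nonneg (integral_nonneg (fun t => norm_nonneg _))]
      refine h2.trans ?_
      rw [MeasureTheory.integral_const, measureReal_restrict_apply_univ, measureReal_def, smul_eq_mul]
  have e5 : ∀ x ∈ Set.Ioc a b, (μ (Set.Ioc a x)).toReal • g x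
      = ∫ t in Set.Ioc a b, f x t ∂μ := by
    intro x hx
    have : ∫ t in Set.Ioc a b, f x t ∂μ
        = (∫ t in Set.Ioc a b, (Set.Ioc a x).indicator (fun _ => (1:ℝ)) t ∂μ) • g x :=
      integral_smul_const _ _
    rw [this]
    congr 1
    rw [MeasureTheory.integral_indicator measurableSet_Ioc, Measure.restrict_restrict
      measurableSet_Ioc, Set.inter_eq_self_of_subset_left (Set.Ioc_subset_Ioc_right hx.2),
      MeasureTheory.integral_const, smul_eq_mul, mul_one, measureReal_restrict_apply_univ, measureReal_def]
  have e7 : ∀ t ∈ Set.Ioc a b, (∫ x in Set.Ioc a b, f x t) = ∫ x in t..b, g x := by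
    intro t ht
    have hft : (fun x => f x t) = Set.indicator (Set.Ici t) g := by
      funext x
      simp only [hfdef, Set.indicator_apply, Set.mem_Ioc, Set.mem_Ici, ite_smul, one_smul,
        zero_smul]
      by_cases hxt : t ≤ x
      · simp [hxt, ht.1]
      · simp [hxt]
    rw [hft, MeasureTheory.integral_indicator measurableSet_Ici, Measure.restrict_restrict
      measurableSet_Ici]
    have : Set.Ici t ∩ Set.Ioc a b = Set.Icc t b := by
      ext x
      exact ⟨fun ⟨h1, h2⟩ => ⟨h1, h2.2⟩, fun ⟨h1, h2⟩ => ⟨h1, ⟨lt_of_lt_of_le ht.1 h1, h2⟩⟩⟩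
    rw [this, integral_Icc_eq_integral_Ioc, ← intervalIntegral.integral_of_le ht.2]
  have e6 : ∫ x in Set.Ioc a b, (μ (Set.Ioc a x)).toReal • g x
      = ∫ t in Set.Ioc a b, (∫ x in t..b, g x) ∂μ := by
    rw [setIntegral_congr_fun measurableSet_Ioc e5]
    rw [MeasureTheory.integral_integral_swap hFub]
    exact setIntegral_congr_fun measurableSet_Ioc e7
  -- final estimate
  have hC0 : 0 ≤ C := le_trans (norm_nonneg _) (hbd b ⟨hab, le_rfl⟩)
  have hT : ‖∫ t in Set.Ioc a b, (∫ x in t..b, g x) ∂μ‖ ≤ C * (S b - S a) := by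
    have := norm_setIntegral_le_of_norm_le_const (lt_of_le_of_ne le_top hfin)
      (fun t ht => hbd t ⟨ht.1.le, ht.2⟩)
    refine this.trans ?_
    rw [measureReal_def, hμIoc, ENNReal.toReal_ofReal (sub_nonneg.mpr (S.mono hab))]
  calc ‖∫ x in a..b, ψ x • g x‖
      ≤ ‖S a • (∫ x in a..b, g x)‖ + ‖∫ t in Set.Ioc a b, (∫ x in t..b, g x) ∂μ‖ := by
        rw [e1, e6]; exact norm_add_le _ _
    _ ≤ |S a| * C + C * (S b - S a) := by
        refine add_le_add ?_ hT
        rw [norm_smul, Real.norm_eq_abs]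
        exact mul_le_mul_of_nonneg_left (hbd a ⟨le_rfl, hab⟩) (abs_nonneg _)
    _ = (|rightLim ψ a| + (rightLim ψ b - rightLim ψ a)) * C := by
        rw [← hSrl, ← hSrl]; ring

end TitchmarshAux

open MeasureTheory Function

theorem titchmarsh_lemma43_pos
    (a b m : ℝ) (F F' G : ℝ → ℝ) (hab : a < b) (hm : 0 < m)
    (hF : ∀ x ∈ Icc a b, HasDerivAt F (F' x) x)
    (hmono : MonotoneOn (fun x => G x / F' x) (Icc a b) ∨
      AntitoneOn (fun x => G x / F' x) (Icc a b))
    (hlow : ∀ x ∈ Icc a b, m ≤ F' x / G x) :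
    ‖∫ x in a..b, (G x : ℂ) * Complex.exp (Complex.I * F x)‖ ≤ 4 / m := by
  have hab' : a ≤ b := hab.le
  by_cases hInt : IntervalIntegrable
      (fun x => (G x : ℂ) * Complex.exp (Complex.I * F x)) volume a b
  swap
  · rw [intervalIntegral.integral_undef hInt]
    rw [norm_zero]
    positivity
  have hG0 : ∀ x ∈ Icc a b, G x ≠ 0 := by
    intro x hx h0
    have := hlow x hx; rw [h0, div_zero] at this; linarith
  have hF'0 : ∀ x ∈ Icc a b, F' x ≠ 0 := by
    intro x hx h0
    have := hlow x hx; rw [h0, zero_div] at this; linarith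
  set φ : ℝ → ℝ := fun x => G x / F' x with hφdef
  have hφ : ∀ x ∈ Icc a b, 0 < φ x ∧ φ x ≤ 1 / m := by
    intro x hx
    have h1 := hlow x hx
    have h2 : 0 < F' x / G x := lt_of_lt_of_le hm h1
    have h3 : φ x = (F' x / G x)⁻¹ := by rw [hφdef]; simp [inv_div]
    constructor
    · rw [h3]; exact inv_pos.mpr h2
    · rw [h3, one_div]; exact inv_anti₀ hm h1
  set c : ℝ → ℝ := fun x => max a (min b x) with hcdef
  have hcmem : ∀ x, c x ∈ Icc a b := fun x => ⟨le_max_left _ _, max_le hab' (min_le_left _ _)⟩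
  have hcmono : Monotone c := fun x y hxy => max_le_max le_rfl (min_le_min le_rfl hxy)
  have hcid : ∀ x ∈ Icc a b, c x = x := by
    intro x hx
    rw [hcdef]
    simp only
    rw [min_eq_right hx.2, max_eq_right hx.1]
  set ψ0 : ℝ → ℝ := fun x => φ (c x) with hψ0def
  have hψ0mem : ∀ x, 0 < ψ0 x ∧ ψ0 x ≤ 1 / m := fun x => hφ _ (hcmem x)
  set g : ℝ → ℂ := fun x => (F' x : ℂ) * Complex.exp (Complex.I * F x) with hgdef
  have hgeq : ∀ x ∈ Icc a b, (G x : ℂ) * Complex.exp (Complex.I * F x) = ψ0 x • g x := by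
    intro x hx
    have hne : (F' x : ℂ) ≠ 0 := by
      exact_mod_cast hF'0 x hx
    rw [hψ0def]
    simp only
    rw [hcid x hx, Complex.real_smul, hgdef, hφdef]
    push_cast
    field_simp
  have hIOn : MeasureTheory.IntegrableOn
      (fun x => (G x : ℂ) * Complex.exp (Complex.I * F x)) (Set.Ioc a b) := by
    rwa [intervalIntegrable_iff_integrableOn_Ioc_of_le hab'] at hInt
  set cm : ℝ := min (φ a) (φ b) with hcmdef
  have hcm : 0 < cm := lt_min (hφ a ⟨le_rfl, hab'⟩).1 (hφ b ⟨hab', le_rfl⟩).1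
  have hφge : ∀ x ∈ Icc a b, cm ≤ φ x := by
    rcases hmono with hM | hA
    · intro x hx
      exact (min_le_left _ _).trans (hM ⟨le_rfl, hab'⟩ hx hx.1)
    · intro x hx
      exact (min_le_right _ _).trans (hA hx ⟨hab', le_rfl⟩ hx.2)
  have hψ0meas : Measurable ψ0 := by
    rcases hmono with hM | hA
    · exact Monotone.measurable (fun x y hxy => hM (hcmem x) (hcmem y) (hcmono hxy))
    · exact Antitone.measurable (fun x y hxy => hA (hcmem x) (hcmem y) (hcmono hxy))
  have hgmeas : MeasureTheory.AEStronglyMeasurable g (volume.restrict (Set.Ioc a b)) := by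
    refine MeasureTheory.AEStronglyMeasurable.congr
      (((hψ0meas.inv).aestronglyMeasurable).smul hIOn.1) ?_
    filter_upwards [MeasureTheory.ae_restrict_mem measurableSet_Ioc] with x hx
    have hx' : x ∈ Icc a b := ⟨hx.1.le, hx.2⟩
    show (ψ0 x)⁻¹ • ((G x : ℂ) * Complex.exp (Complex.I * F x)) = g x
    rw [hgeq x hx', smul_smul, inv_mul_cancel₀ (ne_of_gt (hψ0mem x).1), one_smul]
  have hgOn : MeasureTheory.IntegrableOn g (Set.Ioc a b) := by
    refine MeasureTheory.Integrable.mono' (hIOn.norm.const_mul cm⁻¹) hgmeas ?_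
    filter_upwards [MeasureTheory.ae_restrict_mem measurableSet_Ioc] with x hx
    have hx' : x ∈ Icc a b := ⟨hx.1.le, hx.2⟩
    have h2 : cm * ‖g x‖ ≤ ‖(G x : ℂ) * Complex.exp (Complex.I * F x)‖ := by
      rw [hgeq x hx', norm_smul, Real.norm_eq_abs, abs_of_pos (hψ0mem x).1]
      refine mul_le_mul_of_nonneg_right ?_ (norm_nonneg _)
      rw [hψ0def]; simp only; rw [hcid x hx']
      exact hφge x hx'
    have h3 := mul_le_mul_of_nonneg_left h2 (le_of_lt (inv_pos.mpr hcm))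
    rwa [← mul_assoc, inv_mul_cancel₀ hcm.ne', one_mul] at h3
  have hbd : ∀ t ∈ Icc a b, ‖∫ x in t..b, g x‖ ≤ 2 := by
    intro t ht
    have hint : IntervalIntegrable g volume t b := by
      rw [intervalIntegrable_iff_integrableOn_Ioc_of_le ht.2]
      exact hgOn.mono_set (Set.Ioc_subset_Ioc ht.1 le_rfl)
    have hder : ∀ x ∈ Set.uIcc t b,
        HasDerivAt (fun y => -Complex.I * Complex.exp (Complex.I * F y))
          ((F' x : ℂ) * Complex.exp (Complex.I * F x)) x := by
      intro x hx
      rw [Set.uIcc_of_le ht.2] at hx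
      have h0 := (hF x ⟨le_trans ht.1 hx.1, hx.2⟩).ofReal_comp
      have h1 := HasDerivAt.const_mul Complex.I h0
      have h2 := h1.cexp
      have h3 := HasDerivAt.const_mul (-Complex.I) h2
      refine h3.congr_deriv (Eq.symm ?_)
      have hII : Complex.I * Complex.I = -1 := Complex.I_mul_I
      linear_combination (Complex.exp (Complex.I * (F x : ℂ)) * (F' x : ℂ)) * hII
    rw [hgdef, intervalIntegral.integral_eq_sub_of_hasDerivAt hder hint]
    have hn : ∀ r : ℝ, ‖-Complex.I * Complex.exp (Complex.I * r)‖ = 1 := by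
      intro r
      simp [map_mul, Complex.norm_exp]
    calc ‖-Complex.I * Complex.exp (Complex.I * F b) -
          -Complex.I * Complex.exp (Complex.I * F t)‖
        ≤ ‖-Complex.I * Complex.exp (Complex.I * F b)‖ +
          ‖-Complex.I * Complex.exp (Complex.I * F t)‖ := norm_sub_le _ _
      _ ≤ 2 := by rw [hn, hn]; norm_num
  have hrw : (∫ x in a..b, (G x : ℂ) * Complex.exp (Complex.I * F x))
      = ∫ x in a..b, ψ0 x • g x := by
    refine intervalIntegral.integral_congr ?_
    intro x hx
    rw [Set.uIcc_of_le hab'] at hx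
    exact hgeq x hx
  rw [hrw]
  have h1m : 0 < 1 / m := by positivity
  rcases hmono with hM | hA
  · have hψ0mono : Monotone ψ0 := fun x y hxy => hM (hcmem x) (hcmem y) (hcmono hxy)
    refine (key_bonnet a b 2 hab' ψ0 hψ0mono g hgOn hbd).trans ?_
    have hRa1 : 0 < Function.rightLim ψ0 a :=
      lt_of_lt_of_le (hψ0mem a).1 (hψ0mono.le_rightLim le_rfl)
    have hRb : Function.rightLim ψ0 b ≤ 1 / m :=
      le_trans (hψ0mono.rightLim_le (lt_add_one b)) (hψ0mem (b + 1)).2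
    have hRab : Function.rightLim ψ0 a ≤ Function.rightLim ψ0 b :=
      (hψ0mono.rightLim_le hab).trans (hψ0mono.le_rightLim le_rfl)
    rw [abs_of_pos hRa1]
    have h4 : (4 : ℝ) / m = 4 * (1 / m) := by ring
    rw [h4]
    nlinarith [hRb, hRab, h1m]
  · set ψ : ℝ → ℝ := fun x => -ψ0 x with hψdef
    have hψmono : Monotone ψ := by
      intro x y hxy
      exact neg_le_neg (hA (hcmem x) (hcmem y) (hcmono hxy))
    have hneg : ∫ x in a..b, ψ0 x • g x = -∫ x in a..b, ψ x • g x := by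
      rw [← intervalIntegral.integral_neg]
      refine intervalIntegral.integral_congr (fun x _ => ?_)
      rw [hψdef]
      simp
    rw [hneg, norm_neg]
    refine (key_bonnet a b 2 hab' ψ hψmono g hgOn hbd).trans ?_
    have hψb1 : ∀ x, -(1 / m) ≤ ψ x ∧ ψ x < 0 := by
      intro x
      constructor
      · rw [hψdef]; simp only; linarith [(hψ0mem x).2]
      · rw [hψdef]; simp only; linarith [(hψ0mem x).1]
    have hRa1 : -(1 / m) ≤ Function.rightLim ψ a :=
      le_trans (hψb1 a).1 (hψmono.le_rightLim le_rfl)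
    have hRa2 : Function.rightLim ψ a ≤ 0 :=
      le_trans (hψmono.rightLim_le (lt_add_one a)) (hψb1 (a + 1)).2.le
    have hRb2 : Function.rightLim ψ b ≤ 0 :=
      le_trans (hψmono.rightLim_le (lt_add_one b)) (hψb1 (b + 1)).2.le
    rw [abs_of_nonpos hRa2]
    have h4 : (4 : ℝ) / m = 4 * (1 / m) := by ring
    rw [h4]
    nlinarith [hRa1, hRa2, hRb2, h1m]
end

section
/- Let G, F : ℝ → ℝ with F differentiable on [a,b], G/F' monotone on [a,b], and F'(x)/G(x) ≤ -m < 0 for all x in [a,b]. Then |∫_a^b G(x) e^{i F(x)} dx| ≤ 4/m. -/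
open Real Complex Set intervalIntegral
open MeasureTheory Filter Finset Function Topology

private lemma abel_sum (f h : ℕ → ℂ) : ∀ n : ℕ, ∑ i ∈ Finset.range (n+1), f i * (h (i+1) - h i)
    = f n * h (n+1) - f 0 * h 0 - ∑ i ∈ Finset.range n, (f (i+1) - f i) * h (i+1)
  | 0 => by simp [Finset.sum_range_one]; ring
  | (n+1) => by
      rw [Finset.sum_range_succ, abel_sum f h n, Finset.sum_range_succ]; ring

private lemma step_bound (M c d : ℝ) (hcd : c ≤ d) (hM : 0 ≤ M) (ψ : ℝ → ℝ)
    (hmono : MonotoneOn ψ (Icc c d)) (hbd : ∀ u ∈ Icc c d, |ψ u| ≤ M) (n : ℕ) :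
    ‖∫ u in c..d, (ψ u : ℂ) * Complex.exp (Complex.I * u)‖
      ≤ 4 * M + 2 * M * ((d - c) / (n + 1)) := by
  set δ : ℝ := (d - c) / (n + 1) with hδ
  have hδ0 : 0 ≤ δ := div_nonneg (by linarith) (by positivity)
  set u : ℕ → ℝ := fun j => c + j * δ with hu
  have hu0 : u 0 = c := by simp [hu]
  have huN : u (n + 1) = d := by
    simp only [hu, hδ]
    field_simp
    push_cast; ring
  have hustep : ∀ j : ℕ, u (j + 1) - u j = δ := by
    intro j; simp only [hu]; push_cast; ring
  have humono : Monotone u := monotone_nat_of_le_succ (fun j => by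
    have := hustep j; linarith)
  have humem : ∀ j, j ≤ n + 1 → u j ∈ Icc c d := by
    intro j hj
    constructor
    · rw [← hu0]; exact humono (Nat.zero_le j)
    · rw [← huN]; exact humono hj
  have hEnorm : ∀ t : ℝ, ‖Complex.exp (Complex.I * t)‖ = 1 := by
    intro t
    simp [Complex.norm_exp]
  have hEcont : Continuous (fun t : ℝ => Complex.exp (Complex.I * t)) :=
    Complex.continuous_exp.comp (continuous_const.mul Complex.continuous_ofReal)
  set f : ℝ → ℂ := fun t => (ψ t : ℂ) * Complex.exp (Complex.I * t) with hf
  have hψint : IntervalIntegrable ψ volume c d := by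
    apply MonotoneOn.intervalIntegrable
    rwa [uIcc_of_le hcd]
  have hψintC : IntervalIntegrable (fun t => ((ψ t : ℝ) : ℂ)) volume c d := by
    rw [intervalIntegrable_iff] at hψint ⊢
    exact hψint.ofReal
  have hfint : IntervalIntegrable f volume c d := hψintC.mul_continuousOn hEcont.continuousOn
  have hsub : ∀ j, j ≤ n → uIcc (u j) (u (j+1)) ⊆ uIcc c d := by
    intro j hj
    rw [uIcc_of_le hcd, uIcc_of_le (humono (Nat.le_succ j))]
    exact Icc_subset_Icc (humem j (by omega)).1 (humem (j+1) (by omega)).2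
  have hfintj : ∀ j, j ≤ n → IntervalIntegrable f volume (u j) (u (j+1)) := fun j hj =>
    hfint.mono_set (hsub j hj)
  have hsplit : ∫ t in c..d, f t = ∑ j ∈ Finset.range (n+1), ∫ t in u j..u (j+1), f t := by
    rw [intervalIntegral.sum_integral_adjacent_intervals
      (fun k hk => hfintj k (by omega)), hu0, huN]
  set S : ℂ := ∑ j ∈ Finset.range (n+1),
    (ψ (u j) : ℂ) * ∫ t in u j..u (j+1), Complex.exp (Complex.I * t) with hS
  have hdiff : ‖(∫ t in c..d, f t) - S‖ ≤ 2 * M * δ := by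
    rw [hsplit, hS, ← Finset.sum_sub_distrib]
    calc ‖∑ j ∈ Finset.range (n+1), ((∫ t in u j..u (j+1), f t)
            - (ψ (u j) : ℂ) * ∫ t in u j..u (j+1), Complex.exp (Complex.I * t))‖
        ≤ ∑ j ∈ Finset.range (n+1), ‖(∫ t in u j..u (j+1), f t)
            - (ψ (u j) : ℂ) * ∫ t in u j..u (j+1), Complex.exp (Complex.I * t)‖ :=
          norm_sum_le _ _
      _ ≤ ∑ j ∈ Finset.range (n+1), δ * (ψ (u (j+1)) - ψ (u j)) := by
          apply Finset.sum_le_sum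
          intro j hj
          have hjn : j ≤ n := by simp [Finset.mem_range] at hj; omega
          have hEintj : IntervalIntegrable (fun t : ℝ => (ψ (u j) : ℂ) * Complex.exp (Complex.I * t))
              volume (u j) (u (j+1)) :=
            (hEcont.intervalIntegrable _ _).const_mul _
          rw [← intervalIntegral.integral_const_mul,
            ← intervalIntegral.integral_sub (hfintj j hjn) hEintj]
          refine (intervalIntegral.norm_integral_le_integral_norm (humono (Nat.le_succ j))).trans ?_
          have h3 : ∀ t : ℝ, ‖f t - (ψ (u j) : ℂ) * Complex.exp (Complex.I * t)‖
              = |ψ t - ψ (u j)| := by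
            intro t
            rw [hf]
            simp only
            rw [← sub_mul, norm_mul, hEnorm, mul_one, ← Complex.ofReal_sub,
              Complex.norm_real, Real.norm_eq_abs]
          simp only [h3]
          have hsubj : Icc (u j) (u (j+1)) ⊆ Icc c d :=
            Icc_subset_Icc (humem j (by omega)).1 (humem (j+1) (by omega)).2
          calc (∫ t in u j..u (j+1), |ψ t - ψ (u j)|)
              ≤ ∫ _t in u j..u (j+1), (ψ (u (j+1)) - ψ (u j)) := by
                apply intervalIntegral.integral_mono_on (humono (Nat.le_succ j))
                · exact ((hψint.mono_set (hsub j hjn)).sub intervalIntegrable_const).abs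
                · exact intervalIntegrable_const
                · intro t ht
                  have htm : t ∈ Icc c d := hsubj ht
                  have h4 : ψ (u j) ≤ ψ t := hmono (humem j (by omega)) htm ht.1
                  have h5 : ψ t ≤ ψ (u (j+1)) := hmono htm (humem (j+1) (by omega)) ht.2
                  rw [_root_.abs_of_nonneg (by linarith)]
                  linarith
            _ = δ * (ψ (u (j+1)) - ψ (u j)) := by
                rw [intervalIntegral.integral_const, hustep j, smul_eq_mul]
      _ = δ * (ψ (u (n+1)) - ψ (u 0)) := by
          rw [← Finset.mul_sum, Finset.sum_range_sub (fun j => ψ (u j))]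
      _ ≤ 2 * M * δ := by
          have h1 := hbd (u (n+1)) (humem (n+1) le_rfl)
          have h2 := hbd (u 0) (humem 0 (by omega))
          rw [abs_le] at h1 h2
          nlinarith
  have hI : (Complex.I : ℂ) ≠ 0 := Complex.I_ne_zero
  set g : ℕ → ℂ := fun j => Complex.exp (Complex.I * u j) / Complex.I with hg
  have hgnorm : ∀ j, ‖g j‖ = 1 := by
    intro j
    rw [hg]
    simp only
    rw [norm_div, hEnorm]
    simp
  have hEint : ∀ j : ℕ, (∫ t in u j..u (j+1), Complex.exp (Complex.I * t)) = g (j+1) - g j := by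
    intro j
    rw [integral_exp_mul_complex hI, hg, sub_div]
  have hSeq : S = (ψ (u n) : ℂ) * g (n+1) - (ψ (u 0) : ℂ) * g 0
      - ∑ i ∈ Finset.range n, (((ψ (u (i+1)) : ℂ) - (ψ (u i) : ℂ)) * g (i+1)) := by
    rw [hS]
    simp only [hEint]
    exact abel_sum (fun j => (ψ (u j) : ℂ)) g n
  have hb : ∀ j, j ≤ n + 1 → ‖(ψ (u j) : ℂ)‖ ≤ M := by
    intro j hj
    rw [Complex.norm_real, Real.norm_eq_abs]
    exact hbd _ (humem j hj)
  have hvar : ∑ i ∈ Finset.range n, |ψ (u (i+1)) - ψ (u i)| ≤ 2 * M := by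
    have heq : ∀ i ∈ Finset.range n, |ψ (u (i+1)) - ψ (u i)| = ψ (u (i+1)) - ψ (u i) := by
      intro i hi
      simp only [Finset.mem_range] at hi
      apply _root_.abs_of_nonneg
      have := hmono (humem i (by omega)) (humem (i+1) (by omega)) (humono (Nat.le_succ i))
      linarith
    rw [Finset.sum_congr rfl heq, Finset.sum_range_sub (fun i => ψ (u i))]
    have h1 := hbd (u n) (humem n (by omega))
    have h2 := hbd (u 0) (humem 0 (by omega))
    rw [abs_le] at h1 h2
    linarith
  have hSnorm : ‖S‖ ≤ 4 * M := by
    rw [hSeq]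
    have t1 : ‖(ψ (u n) : ℂ) * g (n+1)‖ ≤ M := by
      rw [norm_mul, hgnorm, mul_one]; exact hb n (by omega)
    have t2 : ‖(ψ (u 0) : ℂ) * g 0‖ ≤ M := by
      rw [norm_mul, hgnorm, mul_one]; exact hb 0 (by omega)
    have t3 : ‖∑ i ∈ Finset.range n, (((ψ (u (i+1)) : ℂ) - (ψ (u i) : ℂ)) * g (i+1))‖ ≤ 2 * M := by
      refine (norm_sum_le _ _).trans ?_
      have heq : ∀ i ∈ Finset.range n, ‖((ψ (u (i+1)) : ℂ) - (ψ (u i) : ℂ)) * g (i+1)‖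
          = |ψ (u (i+1)) - ψ (u i)| := by
        intro i _
        rw [norm_mul, hgnorm, mul_one, ← Complex.ofReal_sub, Complex.norm_real, Real.norm_eq_abs]
      rw [Finset.sum_congr rfl heq]
      exact hvar
    calc ‖(ψ (u n) : ℂ) * g (n+1) - (ψ (u 0) : ℂ) * g 0
            - ∑ i ∈ Finset.range n, (((ψ (u (i+1)) : ℂ) - (ψ (u i) : ℂ)) * g (i+1))‖
        ≤ ‖(ψ (u n) : ℂ) * g (n+1) - (ψ (u 0) : ℂ) * g 0‖
            + ‖∑ i ∈ Finset.range n, (((ψ (u (i+1)) : ℂ) - (ψ (u i) : ℂ)) * g (i+1))‖ :=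
          norm_sub_le _ _
      _ ≤ ‖(ψ (u n) : ℂ) * g (n+1)‖ + ‖(ψ (u 0) : ℂ) * g 0‖
            + ‖∑ i ∈ Finset.range n, (((ψ (u (i+1)) : ℂ) - (ψ (u i) : ℂ)) * g (i+1))‖ := by
          gcongr
          exact norm_sub_le _ _
      _ ≤ M + M + 2 * M := by gcongr
      _ = 4 * M := by ring
  calc ‖∫ t in c..d, f t‖ = ‖((∫ t in c..d, f t) - S) + S‖ := by rw [sub_add_cancel]
    _ ≤ ‖(∫ t in c..d, f t) - S‖ + ‖S‖ := norm_add_le _ _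
    _ ≤ 2 * M * δ + 4 * M := add_le_add hdiff hSnorm
    _ = 4 * M + 2 * M * ((d - c) / (n + 1)) := by rw [hδ]; ring

private lemma core_mono (M c d : ℝ) (hcd : c ≤ d) (hM : 0 ≤ M) (ψ : ℝ → ℝ)
    (hmono : MonotoneOn ψ (Icc c d)) (hbd : ∀ u ∈ Icc c d, |ψ u| ≤ M) :
    ‖∫ u in c..d, (ψ u : ℂ) * Complex.exp (Complex.I * u)‖ ≤ 4 * M := by
  have key := step_bound M c d hcd hM ψ hmono hbd
  have h0 : Tendsto (fun n : ℕ => (d - c) / ((n : ℝ) + 1)) atTop (𝓝 0) := by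
    apply Tendsto.div_atTop (tendsto_const_nhds)
    exact tendsto_atTop_add_const_right _ _ tendsto_natCast_atTop_atTop
  have htend : Tendsto (fun n : ℕ => 4 * M + 2 * M * ((d - c) / ((n : ℝ) + 1)))
      atTop (𝓝 (4 * M)) := by
    have := (h0.const_mul (2 * M)).const_add (4 * M)
    simpa using this
  exact ge_of_tendsto' htend key

private lemma core (M c d : ℝ) (hcd : c ≤ d) (hM : 0 ≤ M) (ψ : ℝ → ℝ)
    (hmono : MonotoneOn ψ (Icc c d) ∨ AntitoneOn ψ (Icc c d))
    (hbd : ∀ u ∈ Icc c d, |ψ u| ≤ M) :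
    ‖∫ u in c..d, (ψ u : ℂ) * Complex.exp (Complex.I * u)‖ ≤ 4 * M := by
  rcases hmono with h | h
  · exact core_mono M c d hcd hM ψ h hbd
  · have h2 : MonotoneOn (fun x => -ψ x) (Icc c d) :=
      fun x hx y hy hxy => neg_le_neg (h hx hy hxy)
    have hbd2 : ∀ u ∈ Icc c d, |(-ψ u)| ≤ M := fun u hu => by
      rw [abs_neg]; exact hbd u hu
    have hres := core_mono M c d hcd hM (fun x => -ψ x) h2 hbd2
    have heq : (∫ u in c..d, ((-ψ u : ℝ) : ℂ) * Complex.exp (Complex.I * u))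
        = -∫ u in c..d, (ψ u : ℂ) * Complex.exp (Complex.I * u) := by
      simp only [Complex.ofReal_neg, neg_mul]
      exact intervalIntegral.integral_neg
    rw [heq, norm_neg] at hres
    exact hres

theorem titchmarsh_lemma43_neg
    (a b m : ℝ) (F F' G : ℝ → ℝ) (hab : a < b) (hm : 0 < m)
    (hF : ∀ x ∈ Icc a b, HasDerivAt F (F' x) x)
    (hmono : MonotoneOn (fun x => G x / F' x) (Icc a b) ∨
      AntitoneOn (fun x => G x / F' x) (Icc a b))
    (hup : ∀ x ∈ Icc a b, F' x / G x ≤ -m) :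
    ‖∫ x in a..b, (G x : ℂ) * Complex.exp (Complex.I * F x)‖ ≤ 4 / m := by
  have hs : MeasurableSet (Icc a b) := measurableSet_Icc
  have hm' : (0 : ℝ) ≤ 1 / m := by positivity
  set φ : ℝ → ℝ := fun x => G x / F' x with hφ
  have hGne : ∀ x ∈ Icc a b, G x ≠ 0 := by
    intro x hx h0
    have := hup x hx
    rw [h0, div_zero] at this
    linarith
  have hF'ne : ∀ x ∈ Icc a b, F' x ≠ 0 := by
    intro x hx h0
    have := hup x hx
    rw [h0, zero_div] at this
    linarith
  have hder : ∀ x ∈ Icc a b, HasDerivWithinAt F (F' x) (Icc a b) x :=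
    fun x hx => (hF x hx).hasDerivWithinAt
  have hφbd : ∀ x ∈ Icc a b, |φ x| ≤ 1 / m := by
    intro x hx
    have h1 := hup x hx
    have ht0 : F' x / G x < 0 := lt_of_le_of_lt h1 (by linarith)
    have heq : φ x = (F' x / G x)⁻¹ := by rw [hφ]; simp only; rw [inv_div]
    rw [heq, abs_inv, _root_.abs_of_neg ht0, one_div]
    exact inv_anti₀ hm (by linarith)
  have hFc : ContinuousOn F (Icc a b) := fun x hx =>
    (hF x hx).continuousAt.continuousWithinAt
  have hderi : ∀ x ∈ interior (Icc a b), HasDerivWithinAt F (F' x) (interior (Icc a b)) x :=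
    fun x hx => (hF x (interior_subset hx)).hasDerivWithinAt
  have hC : ∀ x ∈ Icc a b, (F' x : ℂ) ≠ 0 := fun x hx => Complex.ofReal_ne_zero.2 (hF'ne x hx)
  rcases hasDerivWithinAt_forall_lt_or_forall_gt_of_forall_ne (convex_Icc a b) hder hF'ne
    with hneg | hpos
  · -- F' < 0 : F strictly decreasing
    have st : StrictAntiOn F (Icc a b) :=
      strictAntiOn_of_hasDerivWithinAt_neg (convex_Icc a b) hFc hderi
        (fun x hx => hneg x (interior_subset hx))
    have hinj : InjOn F (Icc a b) := st.injOn
    have himg : F '' Icc a b = Icc (F b) (F a) := by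
      apply Set.Subset.antisymm
      · rintro _ ⟨x, hx, rfl⟩
        exact ⟨st.antitoneOn hx (right_mem_Icc.2 hab.le) hx.2,
               st.antitoneOn (left_mem_Icc.2 hab.le) hx hx.1⟩
      · exact intermediate_value_Icc' hab.le hFc
    have hcd : F b ≤ F a := (st (left_mem_Icc.2 hab.le) (right_mem_Icc.2 hab.le) hab).le
    set ψ : ℝ → ℝ := fun u => φ (Function.invFunOn F (Icc a b) u) with hψ
    have hinvmem : ∀ u ∈ Icc (F b) (F a), Function.invFunOn F (Icc a b) u ∈ Icc a b ∧
        F (Function.invFunOn F (Icc a b) u) = u := by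
      intro u hu
      rw [← himg] at hu
      obtain ⟨x, hx, rfl⟩ := hu
      exact ⟨Function.invFunOn_mem ⟨x, hx, rfl⟩, Function.invFunOn_eq ⟨x, hx, rfl⟩⟩
    have hψbd : ∀ u ∈ Icc (F b) (F a), |ψ u| ≤ 1 / m := fun u hu =>
      hφbd _ (hinvmem u hu).1
    have hle : ∀ u v, u ∈ Icc (F b) (F a) → v ∈ Icc (F b) (F a) → u ≤ v →
        Function.invFunOn F (Icc a b) v ≤ Function.invFunOn F (Icc a b) u := by
      intro u v hu hv huv
      by_contra hc
      push_neg at hc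
      have := st (hinvmem u hu).1 (hinvmem v hv).1 hc
      rw [(hinvmem u hu).2, (hinvmem v hv).2] at this
      linarith
    have hψmono : MonotoneOn ψ (Icc (F b) (F a)) ∨ AntitoneOn ψ (Icc (F b) (F a)) := by
      rcases hmono with h | h
      · right; intro u hu v hv huv
        exact h (hinvmem v hv).1 (hinvmem u hu).1 (hle u v hu hv huv)
      · left; intro u hu v hv huv
        exact h (hinvmem v hv).1 (hinvmem u hu).1 (hle u v hu hv huv)
    have hchg : (∫ u in Icc (F b) (F a), (ψ u : ℂ) * Complex.exp (Complex.I * u))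
        = ∫ x in Icc a b, |F' x| • ((ψ (F x) : ℂ) * Complex.exp (Complex.I * F x)) := by
      rw [← himg]
      exact integral_image_eq_integral_abs_deriv_smul hs hder hinj _
    have hcong : (∫ x in Icc a b, |F' x| • ((ψ (F x) : ℂ) * Complex.exp (Complex.I * F x)))
        = ∫ x in Icc a b, -((G x : ℂ) * Complex.exp (Complex.I * F x)) := by
      apply setIntegral_congr_fun hs
      intro x hx
      have h1 : Function.invFunOn F (Icc a b) (F x) = x := hinj.leftInvOn_invFunOn hx
      simp only [hψ, h1, hφ]
      rw [_root_.abs_of_neg (hneg x hx), Complex.real_smul, Complex.ofReal_neg,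
        Complex.ofReal_div]
      field_simp [hC x hx]
    have hfinal : (∫ u in (F b)..(F a), (ψ u : ℂ) * Complex.exp (Complex.I * u))
        = -∫ x in a..b, (G x : ℂ) * Complex.exp (Complex.I * F x) := by
      rw [intervalIntegral.integral_of_le hab.le, intervalIntegral.integral_of_le hcd,
        ← integral_Icc_eq_integral_Ioc, ← integral_Icc_eq_integral_Ioc, hchg, hcong,
        MeasureTheory.integral_neg]
    have hres := core (1/m) (F b) (F a) hcd hm' ψ hψmono hψbd
    rw [hfinal, norm_neg] at hres
    calc ‖∫ x in a..b, (G x : ℂ) * Complex.exp (Complex.I * F x)‖ ≤ 4 * (1/m) := hres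
      _ = 4 / m := by ring
  · -- F' > 0 : F strictly increasing
    have st : StrictMonoOn F (Icc a b) :=
      strictMonoOn_of_hasDerivWithinAt_pos (convex_Icc a b) hFc hderi
        (fun x hx => hpos x (interior_subset hx))
    have hinj : InjOn F (Icc a b) := st.injOn
    have himg : F '' Icc a b = Icc (F a) (F b) := by
      apply Set.Subset.antisymm
      · rintro _ ⟨x, hx, rfl⟩
        exact ⟨st.monotoneOn (left_mem_Icc.2 hab.le) hx hx.1,
               st.monotoneOn hx (right_mem_Icc.2 hab.le) hx.2⟩
      · exact intermediate_value_Icc hab.le hFc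
    have hcd : F a ≤ F b := (st (left_mem_Icc.2 hab.le) (right_mem_Icc.2 hab.le) hab).le
    set ψ : ℝ → ℝ := fun u => φ (Function.invFunOn F (Icc a b) u) with hψ
    have hinvmem : ∀ u ∈ Icc (F a) (F b), Function.invFunOn F (Icc a b) u ∈ Icc a b ∧
        F (Function.invFunOn F (Icc a b) u) = u := by
      intro u hu
      rw [← himg] at hu
      obtain ⟨x, hx, rfl⟩ := hu
      exact ⟨Function.invFunOn_mem ⟨x, hx, rfl⟩, Function.invFunOn_eq ⟨x, hx, rfl⟩⟩
    have hψbd : ∀ u ∈ Icc (F a) (F b), |ψ u| ≤ 1 / m := fun u hu =>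
      hφbd _ (hinvmem u hu).1
    have hle : ∀ u v, u ∈ Icc (F a) (F b) → v ∈ Icc (F a) (F b) → u ≤ v →
        Function.invFunOn F (Icc a b) u ≤ Function.invFunOn F (Icc a b) v := by
      intro u v hu hv huv
      by_contra hc
      push_neg at hc
      have := st (hinvmem v hv).1 (hinvmem u hu).1 hc
      rw [(hinvmem u hu).2, (hinvmem v hv).2] at this
      linarith
    have hψmono : MonotoneOn ψ (Icc (F a) (F b)) ∨ AntitoneOn ψ (Icc (F a) (F b)) := by
      rcases hmono with h | h
      · left; intro u hu v hv huv
        exact h (hinvmem u hu).1 (hinvmem v hv).1 (hle u v hu hv huv)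
      · right; intro u hu v hv huv
        exact h (hinvmem u hu).1 (hinvmem v hv).1 (hle u v hu hv huv)
    have hchg : (∫ u in Icc (F a) (F b), (ψ u : ℂ) * Complex.exp (Complex.I * u))
        = ∫ x in Icc a b, |F' x| • ((ψ (F x) : ℂ) * Complex.exp (Complex.I * F x)) := by
      rw [← himg]
      exact integral_image_eq_integral_abs_deriv_smul hs hder hinj _
    have hcong : (∫ x in Icc a b, |F' x| • ((ψ (F x) : ℂ) * Complex.exp (Complex.I * F x)))
        = ∫ x in Icc a b, (G x : ℂ) * Complex.exp (Complex.I * F x) := by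
      apply setIntegral_congr_fun hs
      intro x hx
      have h1 : Function.invFunOn F (Icc a b) (F x) = x := hinj.leftInvOn_invFunOn hx
      simp only [hψ, h1, hφ]
      rw [_root_.abs_of_pos (hpos x hx), Complex.real_smul, Complex.ofReal_div]
      field_simp [hC x hx]
    have hfinal : (∫ u in (F a)..(F b), (ψ u : ℂ) * Complex.exp (Complex.I * u))
        = ∫ x in a..b, (G x : ℂ) * Complex.exp (Complex.I * F x) := by
      rw [intervalIntegral.integral_of_le hab.le, intervalIntegral.integral_of_le hcd,
        ← integral_Icc_eq_integral_Ioc, ← integral_Icc_eq_integral_Ioc, hchg, hcong]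
    have hres := core (1/m) (F a) (F b) hcd hm' ψ hψmono hψbd
    rw [hfinal] at hres
    calc ‖∫ x in a..b, (G x : ℂ) * Complex.exp (Complex.I * F x)‖ ≤ 4 * (1/m) := hres
      _ = 4 / m := by ring
end

section
/- Fix a real constant C₂ > 0. Let f : ℝ → ℝ be C² on [c,T] with c > C₂, f'(t) ≠ 0 and f''(t) ≠ 0 on [c,T], and suppose t ↦ f'(t)³/(f''(t)·log(t/C₂)) is monotone and strictly positive (or strictly negative) on [c,T]. Then |∫_c^T e^{i f(t)} · (f''(t)/f'(t)²) · log(t/C₂) dt| ≤ 4 / min(|f'(c)³/(f''(c) log(c/C₂))|, |f'(T)³/(f''(T) log(T/C₂))|). -/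
open Real Complex Set intervalIntegral MeasureTheory

lemma abel_monotone (a b C : ℝ) (hab : a ≤ b) (φ : ℝ → ℝ) (hφ : Monotone φ)
    (hφc : Continuous φ) (g : ℝ → ℂ) (hg : Continuous g)
    (hC : ∀ s ∈ Icc a b, ‖∫ t in s..b, g t‖ ≤ C) :
    ‖∫ t in a..b, φ t • g t‖ ≤ (|φ a| + (φ b - φ a)) * C := by
  have hC0 : 0 ≤ C := by
    have := hC b ⟨hab, le_refl b⟩
    simpa using this
  set S : StieltjesFunction ℝ := ⟨φ, hφ, fun x => (hφc.continuousAt).continuousWithinAt⟩ with hS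
  have hSφ : ∀ x, S x = φ x := fun x => rfl
  set ν : Measure ℝ := S.measure.restrict (Ioc a b) with hν
  haveI : IsFiniteMeasure ν := by
    constructor
    rw [hν, Measure.restrict_apply_univ, S.measure_Ioc]
    exact ENNReal.ofReal_lt_top
  -- split the integral
  have hgI : IntervalIntegrable g MeasureTheory.volume a b := hg.intervalIntegrable _ _
  have hsplit : ∫ t in a..b, φ t • g t
      = φ a • (∫ t in a..b, g t) + ∫ t in a..b, (φ t - φ a) • g t := by
    rw [← intervalIntegral.integral_smul, ← intervalIntegral.integral_add (f := fun t => φ a • g t) (g := fun t => (φ t - φ a) • g t)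
      ((by fun_prop : Continuous fun t => φ a • g t).intervalIntegrable _ _)
      ((by fun_prop : Continuous fun t => (φ t - φ a) • g t).intervalIntegrable _ _)]
    apply intervalIntegral.integral_congr
    intro t _
    show φ t • g t = φ a • g t + (φ t - φ a) • g t
    rw [← add_smul, add_sub_cancel]
  -- the main (Stieltjes–Fubini) part
  set F : ℝ → ℝ → ℂ := fun t s => if s ≤ t then g t else 0 with hF
  have key : ∀ t ∈ Ioc a b, (φ t - φ a) • g t = ∫ s, F t s ∂ν := by
    intro t ht
    have h1 : (fun s => F t s) = (Iic t).indicator (fun _ => g t) := by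
      funext s
      simp [hF, Set.indicator_apply, Set.mem_Iic]
    rw [h1, MeasureTheory.integral_indicator_const (g t) measurableSet_Iic]
    rw [hν, measureReal_def, Measure.restrict_apply measurableSet_Iic]
    have h2 : Iic t ∩ Ioc a b = Ioc a t := by
      ext x
      simp only [Set.mem_inter_iff, Set.mem_Iic, Set.mem_Ioc]
      constructor
      · rintro ⟨h3, h4, h5⟩; exact ⟨h4, h3⟩
      · rintro ⟨h3, h4⟩; exact ⟨h4, h3, h4.trans ht.2⟩
    rw [h2, S.measure_Ioc, ENNReal.toReal_ofReal (sub_nonneg.2 (hφ ht.1.le))]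
  have hJ : ∫ t in a..b, (φ t - φ a) • g t = ∫ t in Ioc a b, (∫ s, F t s ∂ν) := by
    rw [intervalIntegral.integral_of_le hab]
    exact MeasureTheory.setIntegral_congr_fun measurableSet_Ioc key
  -- integrability on the product for Fubini
  obtain ⟨K, hK⟩ := (isCompact_Icc (a := a) (b := b)).exists_bound_of_continuousOn
    hg.continuousOn
  have hK0 : 0 ≤ K := le_trans (norm_nonneg _) (hK a ⟨le_refl a, hab⟩)
  have hFint : Integrable (Function.uncurry F)
      ((MeasureTheory.volume.restrict (Ioc a b)).prod ν) := by
    have hmeas : StronglyMeasurable (Function.uncurry F) := by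
      have : Function.uncurry F = fun p : ℝ × ℝ =>
          Set.indicator {p : ℝ × ℝ | p.2 ≤ p.1} (fun p => g p.1) p := by
        funext p
        simp [Function.uncurry, hF, Set.indicator_apply]
      rw [this]
      exact (hg.comp continuous_fst).stronglyMeasurable.indicator
        (measurableSet_le measurable_snd measurable_fst)
    refine (MeasureTheory.integrable_const K).mono' hmeas.aestronglyMeasurable ?_
    have hprod : (MeasureTheory.volume.restrict (Ioc a b)).prod ν
        = (MeasureTheory.volume.prod S.measure).restrict ((Ioc a b) ×ˢ (Ioc a b)) := by
      rw [hν, Measure.prod_restrict]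
    rw [hprod]
    filter_upwards [MeasureTheory.ae_restrict_mem (measurableSet_Ioc.prod measurableSet_Ioc)]
      with p hp
    rcases hp with ⟨hp1, _⟩
    by_cases h : p.2 ≤ p.1
    · simpa [Function.uncurry, hF, h] using hK p.1 ⟨hp1.1.le, hp1.2⟩
    · simp [Function.uncurry, hF, h, hK0]
  -- Fubini
  have hswap : ∫ t in Ioc a b, (∫ s, F t s ∂ν)
      = ∫ s, (∫ t in Ioc a b, F t s) ∂ν :=
    MeasureTheory.integral_integral_swap hFint
  -- inner integral bound
  have hinner : ∀ᵐ s ∂ν, ‖∫ t in Ioc a b, F t s‖ ≤ C := by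
    rw [hν]
    filter_upwards [MeasureTheory.ae_restrict_mem measurableSet_Ioc] with s hs
    have h1 : (fun t => F t s) = Set.indicator (Ici s) g := by
      funext t
      simp [hF, Set.indicator_apply, Set.mem_Ici]
    rw [h1, MeasureTheory.setIntegral_indicator measurableSet_Ici]
    have h2 : Ioc a b ∩ Ici s = Icc s b := by
      ext x
      simp only [Set.mem_inter_iff, Set.mem_Ioc, Set.mem_Ici, Set.mem_Icc]
      constructor
      · rintro ⟨⟨_, h4⟩, h5⟩; exact ⟨h5, h4⟩
      · rintro ⟨h3, h4⟩; exact ⟨⟨lt_of_lt_of_le hs.1 h3, h4⟩, h3⟩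
    rw [h2, MeasureTheory.integral_Icc_eq_integral_Ioc,
      ← intervalIntegral.integral_of_le hs.2]
    exact hC s ⟨hs.1.le, hs.2⟩
  have hJbound : ‖∫ s, (∫ t in Ioc a b, F t s) ∂ν‖ ≤ C * (φ b - φ a) := by
    have := MeasureTheory.norm_integral_le_of_norm_le_const (μ := ν) hinner
    have hν2 : (ν Set.univ).toReal = φ b - φ a := by
      rw [hν, Measure.restrict_apply_univ, S.measure_Ioc,
        ENNReal.toReal_ofReal (sub_nonneg.2 (hφ hab))]
    rwa [measureReal_def, hν2] at this
  -- combine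
  rw [hsplit]
  calc ‖φ a • (∫ t in a..b, g t) + ∫ t in a..b, (φ t - φ a) • g t‖
      ≤ ‖φ a • (∫ t in a..b, g t)‖ + ‖∫ t in a..b, (φ t - φ a) • g t‖ := norm_add_le _ _
    _ ≤ |φ a| * C + C * (φ b - φ a) := by
        gcongr
        · rw [norm_smul, Real.norm_eq_abs]
          exact mul_le_mul_of_nonneg_left (hC a ⟨le_refl a, hab⟩) (abs_nonneg _)
        · rw [hJ, hswap]; exact hJbound
    _ = (|φ a| + (φ b - φ a)) * C := by ring

lemma abel_bound (a b C : ℝ) (hab : a ≤ b) (φ : ℝ → ℝ)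
    (hφ : MonotoneOn φ (Icc a b) ∨ AntitoneOn φ (Icc a b))
    (hφc : ContinuousOn φ (Icc a b)) (g : ℝ → ℂ) (hg : ContinuousOn g (Icc a b))
    (hC : ∀ s ∈ Icc a b, ‖∫ t in s..b, g t‖ ≤ C) :
    ‖∫ t in a..b, φ t • g t‖ ≤ (|φ a| + |φ b - φ a|) * C := by
  set cl : ℝ → ℝ := fun t => max a (min t b) with hcl
  have hclmono : Monotone cl := fun x y h =>
    max_le_max le_rfl (min_le_min h le_rfl)
  have hclcont : Continuous cl := continuous_const.max (continuous_id.min continuous_const)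
  have hclmem : ∀ t, cl t ∈ Icc a b :=
    fun t => ⟨le_max_left _ _, max_le hab (min_le_right _ _)⟩
  have hclfix : ∀ t ∈ Icc a b, cl t = t := by
    intro t ht
    rw [hcl]
    simp only [min_eq_left ht.2, max_eq_right ht.1]
  set φ' : ℝ → ℝ := fun t => φ (cl t) with hφ'
  set g' : ℝ → ℂ := fun t => g (cl t) with hg'
  have hφ'c : Continuous φ' := hφc.comp_continuous hclcont hclmem
  have hg'c : Continuous g' := hg.comp_continuous hclcont hclmem
  have hint : ∫ t in a..b, φ t • g t = ∫ t in a..b, φ' t • g' t := by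
    apply intervalIntegral.integral_congr
    intro t ht
    rw [uIcc_of_le hab] at ht
    rw [hφ', hg']
    simp only [hclfix t ht]
  have hC' : ∀ s ∈ Icc a b, ‖∫ t in s..b, g' t‖ ≤ C := by
    intro s hs
    have : ∫ t in s..b, g' t = ∫ t in s..b, g t := by
      apply intervalIntegral.integral_congr
      intro t ht
      rw [uIcc_of_le hs.2] at ht
      rw [hg']
      simp only [hclfix t ⟨le_trans hs.1 ht.1, ht.2⟩]
    rw [this]
    exact hC s hs
  have ha' : φ' a = φ a := by rw [hφ']; simp only [hclfix a ⟨le_refl a, hab⟩]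
  have hb' : φ' b = φ b := by rw [hφ']; simp only [hclfix b ⟨hab, le_refl b⟩]
  rw [hint]
  rcases hφ with hm | hm
  · have hmono : Monotone φ' := fun x y h => hm (hclmem x) (hclmem y) (hclmono h)
    have := abel_monotone a b C hab φ' hmono hφ'c g' hg'c hC'
    rw [ha', hb'] at this
    have habs : |φ b - φ a| = φ b - φ a :=
      abs_of_nonneg (sub_nonneg.2 (hm ⟨le_refl a, hab⟩ ⟨hab, le_refl b⟩ hab))
    rw [habs]
    exact this
  · have hmono : Monotone (fun t => -φ' t) := fun x y h =>
      neg_le_neg (hm (hclmem x) (hclmem y) (hclmono h))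
    have := abel_monotone a b C hab (fun t => -φ' t) hmono hφ'c.neg g' hg'c hC'
    simp only [neg_smul] at this
    rw [intervalIntegral.integral_neg, norm_neg, ha', hb'] at this
    have habs : |φ b - φ a| = -(φ b - φ a) :=
      abs_of_nonpos (sub_nonpos.2 (hm ⟨le_refl a, hab⟩ ⟨hab, le_refl b⟩ hab))
    rw [habs]
    have heq : (|φ a| + -(φ b - φ a)) * C = (|-φ a| + (-φ b - -φ a)) * C := by
      rw [abs_neg]; ring
    rw [heq]
    exact this

lemma endpoint_bound_pos {A B : ℝ} (hA : 0 < A) (hB : 0 < B) :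
    (|1 / A| + |1 / B - 1 / A|) * 2 ≤ 4 / min A B := by
  have hm : 0 < min A B := lt_min hA hB
  have h1 : 1 / A ≤ 1 / min A B := one_div_le_one_div_of_le hm (min_le_left _ _)
  have h2 : 1 / B ≤ 1 / min A B := one_div_le_one_div_of_le hm (min_le_right _ _)
  have hA' : 0 < 1 / A := by positivity
  have hB' : 0 < 1 / B := by positivity
  have habs1 : |1 / A| = 1 / A := abs_of_pos hA'
  have habs2 : |1 / B - 1 / A| ≤ 1 / min A B := by
    rcases le_total (1 / B) (1 / A) with h | h
    · rw [_root_.abs_of_nonpos (by linarith)]; linarith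
    · rw [_root_.abs_of_nonneg (by linarith)]; linarith
  have h4 : 4 / min A B = (1 / min A B + 1 / min A B) * 2 := by ring
  rw [habs1, h4]
  linarith

lemma endpoint_bound {A B : ℝ} (h : (0 < A ∧ 0 < B) ∨ (A < 0 ∧ B < 0)) :
    (|1 / A| + |1 / B - 1 / A|) * 2 ≤ 4 / min |A| |B| := by
  rcases h with ⟨hA, hB⟩ | ⟨hA, hB⟩
  · rw [abs_of_pos hA, abs_of_pos hB]
    exact endpoint_bound_pos hA hB
  · have := endpoint_bound_pos (neg_pos.2 hA) (neg_pos.2 hB)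
    rw [abs_of_neg hA, abs_of_neg hB]
    have e1 : |1 / -A| = |1 / A| := by rw [div_neg, abs_neg]
    have e2 : |1 / -B - 1 / -A| = |1 / B - 1 / A| := by
      rw [div_neg, div_neg]
      rw [show -(1 / B) - -(1 / A) = -(1 / B - 1 / A) by ring, abs_neg]
    rwa [e1, e2] at this

theorem oscillatory_second_integral_bound
    (C₂ c T : ℝ) (f f' f'' : ℝ → ℝ) (hC₂ : 0 < C₂) (hc : C₂ < c) (hcT : c < T)
    (hf : ∀ t ∈ Icc c T, HasDerivAt f (f' t) t)
    (hf' : ∀ t ∈ Icc c T, HasDerivAt f' (f'' t) t)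
    (hf''cont : ContinuousOn f'' (Icc c T))
    (hf'ne : ∀ t ∈ Icc c T, f' t ≠ 0)
    (hf''ne : ∀ t ∈ Icc c T, f'' t ≠ 0)
    (hmono : MonotoneOn (fun t => (f' t) ^ 3 / (f'' t * Real.log (t / C₂))) (Icc c T) ∨
      AntitoneOn (fun t => (f' t) ^ 3 / (f'' t * Real.log (t / C₂))) (Icc c T))
    (hsign : (∀ t ∈ Icc c T, 0 < (f' t) ^ 3 / (f'' t * Real.log (t / C₂))) ∨
      (∀ t ∈ Icc c T, (f' t) ^ 3 / (f'' t * Real.log (t / C₂)) < 0)) :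
    ‖(∫ t in c..T,
        Complex.exp (Complex.I * f t) * (f'' t / (f' t) ^ 2) * Real.log (t / C₂))‖ ≤
      4 / min |(f' c) ^ 3 / (f'' c * Real.log (c / C₂))|
        |(f' T) ^ 3 / (f'' T * Real.log (T / C₂))| := by
  have hcT' : c ≤ T := hcT.le
  have hcmem : c ∈ Icc c T := ⟨le_refl c, hcT'⟩
  have hTmem : T ∈ Icc c T := ⟨hcT', le_refl T⟩
  set φ : ℝ → ℝ := fun t => f'' t * Real.log (t / C₂) / (f' t) ^ 3 with hφdef
  have hφH : ∀ t, φ t = 1 / ((f' t) ^ 3 / (f'' t * Real.log (t / C₂))) :=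
    fun t => (one_div_div _ _).symm
  -- continuity facts
  have hfcont : ContinuousOn f (Icc c T) :=
    fun t ht => (hf t ht).continuousAt.continuousWithinAt
  have hf'cont : ContinuousOn f' (Icc c T) :=
    fun t ht => (hf' t ht).continuousAt.continuousWithinAt
  have hlogcont : ContinuousOn (fun t => Real.log (t / C₂)) (Icc c T) := by
    apply Real.continuousOn_log.comp ((continuous_id.div_const C₂).continuousOn)
    intro t ht
    have hpos : 0 < t / C₂ := div_pos (lt_trans hC₂ (lt_of_lt_of_le hc ht.1)) hC₂
    simp only [Set.mem_compl_iff, Set.mem_singleton_iff, id_eq]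
    exact ne_of_gt hpos
  have hφcont : ContinuousOn φ (Icc c T) :=
    (hf''cont.mul hlogcont).div (hf'cont.pow 3)
      (fun t ht => pow_ne_zero 3 (hf'ne t ht))
  -- the exponential and g
  set E : ℝ → ℂ := fun t => Complex.exp (Complex.I * f t) with hEdef
  set g : ℝ → ℂ := fun t => (f' t : ℂ) * E t with hgdef
  have hgcont : ContinuousOn g (Icc c T) := by
    apply ContinuousOn.mul
    · exact Complex.continuous_ofReal.comp_continuousOn hf'cont
    · exact Complex.continuous_exp.comp_continuousOn
        ((continuous_const.continuousOn).mul
          (Complex.continuous_ofReal.comp_continuousOn hfcont))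
  have hE2 : ∀ t ∈ Icc c T, HasDerivAt (fun s => -Complex.I * E s) (g t) t := by
    intro t ht
    have h1 : HasDerivAt (fun s : ℝ => (f s : ℂ)) (f' t) t := (hf t ht).ofReal_comp
    have h2 : HasDerivAt (fun s : ℝ => Complex.I * f s) (Complex.I * f' t) t :=
      h1.const_mul Complex.I
    have h3 := h2.cexp
    have h4 := h3.const_mul (-Complex.I)
    refine h4.congr_deriv (Eq.symm ?_)
    rw [hgdef, hEdef]
    have := Complex.I_mul_I
    simp only
    linear_combination ((f' t : ℂ) * Complex.exp (Complex.I * f t)) * this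
  have hC : ∀ s ∈ Icc c T, ‖∫ t in s..T, g t‖ ≤ 2 := by
    intro s hs
    have hsub : uIcc s T ⊆ Icc c T := by
      rw [uIcc_of_le hs.2]
      exact Icc_subset_Icc hs.1 le_rfl
    have hgint : IntervalIntegrable g MeasureTheory.volume s T :=
      (hgcont.mono hsub).intervalIntegrable
    have := intervalIntegral.integral_eq_sub_of_hasDerivAt
      (f := fun s => -Complex.I * E s) (fun t ht => hE2 t (hsub ht)) hgint
    rw [this]
    have hnorm : ∀ t : ℝ, ‖-Complex.I * E t‖ = 1 := by
      intro t
      rw [norm_mul, hEdef]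
      simp [Complex.norm_exp]
    calc ‖-Complex.I * E T - -Complex.I * E s‖
        ≤ ‖-Complex.I * E T‖ + ‖-Complex.I * E s‖ := norm_sub_le _ _
      _ = 2 := by rw [hnorm, hnorm]; norm_num
  -- rewrite the integrand
  have hinteq : (∫ t in c..T,
      Complex.exp (Complex.I * f t) * (f'' t / (f' t) ^ 2) * Real.log (t / C₂))
      = ∫ t in c..T, φ t • g t := by
    apply intervalIntegral.integral_congr
    intro t ht
    rw [uIcc_of_le hcT'] at ht
    have hne : (f' t : ℂ) ≠ 0 := Complex.ofReal_ne_zero.mpr (hf'ne t ht)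
    rw [hφdef, hgdef, hEdef]
    simp only [real_smul]
    push_cast
    field_simp
  -- monotonicity of φ
  have hφmono : MonotoneOn φ (Icc c T) ∨ AntitoneOn φ (Icc c T) := by
    rcases hmono with hm | hm
    · right
      intro x hx y hy hxy
      rw [hφH x, hφH y]
      rcases hsign with hs | hs
      · exact one_div_le_one_div_of_le (hs x hx) (hm hx hy hxy)
      · exact one_div_le_one_div_of_neg_of_le (hs y hy) (hm hx hy hxy)
    · left
      intro x hx y hy hxy
      rw [hφH x, hφH y]
      rcases hsign with hs | hs
      · exact one_div_le_one_div_of_le (hs y hy) (hm hx hy hxy)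
      · exact one_div_le_one_div_of_neg_of_le (hs x hx) (hm hx hy hxy)
  have hmain := abel_bound c T 2 hcT' φ hφmono hφcont g hgcont hC
  rw [hinteq]
  refine le_trans hmain ?_
  rw [hφH c, hφH T]
  exact endpoint_bound (by
    rcases hsign with hs | hs
    · exact Or.inl ⟨hs c hcmem, hs T hTmem⟩
    · exact Or.inr ⟨hs c hcmem, hs T hTmem⟩)
end

section
/- Let f : ℝ → ℝ be C² on [c,∞) with f' nonvanishing, and assume: (i) 1/f'(T) = o(T), (ii) f''(T)/f'(T)³ = o(T), (iii) ∫_c^T |f'(t)| log t dt = o(T log T), (iv) t f'(t)² is monotone and of constant sign on [c,∞), and (v) f'(t)³/(f''(t) log(t/C₂)) is monotone and of constant sign on [c,∞) for a fixed C₂ > 0 with c > C₂. Then (1/(T log T))·∫_c^T e^{i f(t)} log(t/C₂) dt → 0 as T → ∞. -/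
open Real Filter Asymptotics Set MeasureTheory



lemma key_inv_le {x y : ℝ} (hsign : (0 < x ∧ 0 < y) ∨ (x < 0 ∧ y < 0)) (hxy : x ≤ y) :
    1 / y ≤ 1 / x := by
  have hx : x ≠ 0 := by rcases hsign with ⟨h, _⟩ | ⟨h, _⟩ <;> [exact ne_of_gt h; exact ne_of_lt h]
  have hy : y ≠ 0 := by rcases hsign with ⟨_, h⟩ | ⟨_, h⟩ <;> [exact ne_of_gt h; exact ne_of_lt h]
  have hxy0 : 0 < x * y := by
    rcases hsign with ⟨h1, h2⟩ | ⟨h1, h2⟩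
    · exact mul_pos h1 h2
    · exact mul_pos_of_neg_of_neg h1 h2
  have hkey : 1 / x - 1 / y = (y - x) / (x * y) := by field_simp
  have : 0 ≤ (y - x) / (x * y) := div_nonneg (by linarith) hxy0.le
  linarith [hkey ▸ this]

lemma one_div_mono_or_anti {s : Set ℝ} {k : ℝ → ℝ}
    (hsign : (∀ t ∈ s, 0 < k t) ∨ (∀ t ∈ s, k t < 0))
    (hmono : MonotoneOn k s ∨ AntitoneOn k s) :
    MonotoneOn (fun t => 1 / k t) s ∨ AntitoneOn (fun t => 1 / k t) s := by
  have hs : ∀ x ∈ s, ∀ y ∈ s, k x ≤ k y → 1 / k y ≤ 1 / k x := by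
    intro x hx y hy h
    apply key_inv_le _ h
    rcases hsign with hpos | hneg
    · exact Or.inl ⟨hpos x hx, hpos y hy⟩
    · exact Or.inr ⟨hneg x hx, hneg y hy⟩
  rcases hmono with hm | hm
  · exact Or.inr (fun x hx y hy hxy => hs x hx y hy (hm hx hy hxy))
  · exact Or.inl (fun x hx y hy hxy => hs y hy x hx (hm hx hy hxy))



lemma layercake_bound (a b M P : ℝ) (hab : a ≤ b) (p r : ℝ → ℝ)
    (hp : Continuous p) (hr : Continuous r)
    (hp0 : ∀ t ∈ Icc a b, 0 ≤ p t) (hpP : ∀ t ∈ Icc a b, p t ≤ P)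
    (hord : ∀ s : ℝ, ∀ x ∈ Icc a b, ∀ y ∈ Icc a b, ∀ z ∈ Icc a b,
      x ≤ y → y ≤ z → s < p x → s < p z → s < p y)
    (hH : ∀ x ∈ Icc a b, |∫ t in a..x, r t| ≤ M) :
    |∫ t in a..b, p t * r t| ≤ 2 * M * P := by
  have M0 : 0 ≤ M := by
    have := hH a ⟨le_rfl, hab⟩
    simpa using this
  have P0 : 0 ≤ P := le_trans (hp0 a ⟨le_rfl, hab⟩) (hpP a ⟨le_rfl, hab⟩)
  set μ : Measure ℝ := volume.restrict (Ioc (0:ℝ) P) with hμdef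
  set ν : Measure ℝ := volume.restrict (Icc a b) with hνdef
  haveI : IsFiniteMeasure μ := ⟨by rw [hμdef, Measure.restrict_apply_univ]; exact measure_Ioc_lt_top⟩
  haveI : IsFiniteMeasure ν := ⟨by rw [hνdef, Measure.restrict_apply_univ]; exact measure_Icc_lt_top⟩
  obtain ⟨C, hC⟩ := isCompact_Icc.exists_bound_of_continuousOn hr.continuousOn (s := Icc a b)
  set step : ℝ → ℝ := Set.indicator (Ioi (0:ℝ)) (fun _ => (1:ℝ)) with hstepdef
  have hstep_meas : Measurable step := measurable_const.indicator measurableSet_Ioi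
  have hstep_le : ∀ x, |step x| ≤ 1 := by
    intro x
    rw [hstepdef, Set.indicator_apply]
    split <;> simp
  set F : ℝ → ℝ → ℝ := fun t s => step (p t - s) * r t with hFdef
  -- integrability on the product
  have hFmeas : Measurable (Function.uncurry F) := by
    apply Measurable.mul
    · exact hstep_meas.comp ((hp.comp continuous_fst).sub continuous_snd).measurable
    · exact (hr.comp continuous_fst).measurable
  have hprod : ν.prod μ = (volume.prod volume).restrict (Icc a b ×ˢ Ioc (0:ℝ) P) := by
    rw [hνdef, hμdef, Measure.prod_restrict]
  have hae_mem : ∀ᵐ z ∂(ν.prod μ), z ∈ Icc a b ×ˢ Ioc (0:ℝ) P := by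
    rw [hprod]
    exact ae_restrict_mem (measurableSet_Icc.prod measurableSet_Ioc)
  have hFint : Integrable (Function.uncurry F) (ν.prod μ) := by
    refine Integrable.mono' (integrable_const C) hFmeas.aestronglyMeasurable ?_
    filter_upwards [hae_mem] with z hz
    have h1 : |r z.1| ≤ C := by
      have := hC z.1 hz.1
      simpa [Real.norm_eq_abs] using this
    calc ‖Function.uncurry F z‖ = |step (p z.1 - z.2)| * |r z.1| := by
          simp [Function.uncurry, hFdef, abs_mul, Real.norm_eq_abs]
      _ ≤ 1 * |r z.1| := mul_le_mul_of_nonneg_right (hstep_le _) (abs_nonneg _)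
      _ ≤ C := by rw [one_mul]; exact h1
  -- Step A : interval integral to ν integral
  have hA : ∫ t in a..b, p t * r t = ∫ t, p t * r t ∂ν := by
    rw [intervalIntegral.integral_of_le hab, hνdef, ← integral_Icc_eq_integral_Ioc]
  -- Step B : pointwise layer representation
  have hB : ∀ t ∈ Icc a b, p t * r t = ∫ s, F t s ∂μ := by
    intro t ht
    have h1 : ∫ s, F t s ∂μ = (∫ s, step (p t - s) ∂μ) * r t := integral_mul_const (r t) _
    have h2 : (fun s => step (p t - s)) = fun s => (Iio (p t)).indicator (fun _ => (1:ℝ)) s := by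
      funext s
      rw [hstepdef, Set.indicator_apply, Set.indicator_apply]
      have h : (p t - s ∈ Ioi (0:ℝ)) ↔ (s ∈ Iio (p t)) := by
        simp [mem_Ioi, mem_Iio, sub_pos]
      simp only [h]
    have h3 : ∫ s, step (p t - s) ∂μ = p t := by
      rw [h2, integral_indicator measurableSet_Iio, hμdef,
        Measure.restrict_restrict measurableSet_Iio]
      have hset : Iio (p t) ∩ Ioc (0:ℝ) P = Ioo 0 (p t) := by
        ext s
        constructor
        · rintro ⟨hs1, hs2, hs3⟩; exact ⟨hs2, hs1⟩
        · rintro ⟨hs1, hs2⟩; exact ⟨hs2, hs1, le_trans (le_of_lt hs2) (hpP t ht)⟩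
      rw [hset, setIntegral_const]
      simp [Real.volume_Ioo, ENNReal.toReal_ofReal (hp0 t ht), hp0 t ht]
    rw [h1, h3]
  -- Step C : swap
  have hswap : ∫ t, (∫ s, F t s ∂μ) ∂ν = ∫ s, (∫ t, F t s ∂ν) ∂μ :=
    integral_integral_swap hFint
  -- Step D : inner bound
  have hD : ∀ s : ℝ, |∫ t, F t s ∂ν| ≤ 2 * M := by
    intro s
    have hind : ∀ t, F t s = Set.indicator {t' | s < p t'} r t := by
      intro t
      show step (p t - s) * r t = _
      rw [hstepdef, Set.indicator_apply, Set.indicator_apply]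
      have h : (p t - s ∈ Ioi (0:ℝ)) ↔ (t ∈ {t' | s < p t'}) := by
        simp [mem_Ioi, mem_setOf_eq, sub_pos]
      simp only [h]
      split <;> simp
    have hUopen : IsOpen {t' | s < p t'} := isOpen_lt continuous_const hp
    have h1 : ∫ t, F t s ∂ν = ∫ t in {t' | s < p t'} ∩ Icc a b, r t := by
      calc ∫ t, F t s ∂ν = ∫ t, Set.indicator {t' | s < p t'} r t ∂ν :=
            integral_congr_ae (Filter.Eventually.of_forall hind)
        _ = ∫ t in {t' | s < p t'}, r t ∂ν := integral_indicator hUopen.measurableSet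
        _ = ∫ t in {t' | s < p t'} ∩ Icc a b, r t := by
            rw [hνdef, Measure.restrict_restrict hUopen.measurableSet]
    set U : Set ℝ := {t' | s < p t'} ∩ Icc a b with hUdef
    rcases eq_empty_or_nonempty U with hUe | hUne
    · rw [h1, hUe]
      simp only [Measure.restrict_empty, integral_zero_measure, abs_zero]
      linarith
    · obtain ⟨u, hu⟩ := hUne
      have hUne' : U.Nonempty := ⟨u, hu⟩
      have hUsub : U ⊆ Icc a b := inter_subset_right
      have hbdd_below : BddBelow U := ⟨a, fun x hx => (hUsub hx).1⟩
      have hbdd_above : BddAbove U := ⟨b, fun x hx => (hUsub hx).2⟩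
      set e₁ := sInf U with he₁
      set e₂ := sSup U with he₂
      have h12 : e₁ ≤ e₂ := csInf_le_csSup hUne' hbdd_below hbdd_above
      have he₁ab : e₁ ∈ Icc a b :=
        ⟨le_csInf hUne' (fun x hx => (hUsub hx).1),
         le_trans (csInf_le hbdd_below hu) (hUsub hu).2⟩
      have he₂ab : e₂ ∈ Icc a b :=
        ⟨le_trans (hUsub hu).1 (le_csSup hbdd_above hu),
         csSup_le hUne' (fun x hx => (hUsub hx).2)⟩
      have hIoo_sub : Ioo e₁ e₂ ⊆ U := by
        intro y hy
        obtain ⟨x, hxU, hxy⟩ := (csInf_lt_iff hbdd_below hUne').1 hy.1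
        obtain ⟨z, hzU, hyz⟩ := (lt_csSup_iff hbdd_above hUne').1 hy.2
        have hyIcc : y ∈ Icc a b := ⟨le_trans (hUsub hxU).1 hxy.le, le_trans hyz.le (hUsub hzU).2⟩
        exact ⟨hord s x (hUsub hxU) y hyIcc z (hUsub hzU) hxy.le hyz.le hxU.1 hzU.1, hyIcc⟩
      have hU_sub2 : U ⊆ Icc e₁ e₂ := fun x hx => ⟨csInf_le hbdd_below hx, le_csSup hbdd_above hx⟩
      have haeU : U =ᶠ[ae volume] Ioo e₁ e₂ := by
        rw [MeasureTheory.ae_eq_set]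
        constructor
        · refine measure_mono_null (fun x hx => ?_) (Set.Countable.measure_zero
            ((Set.toFinite ({e₁, e₂} : Set ℝ)).countable) _)
          rcases hx with ⟨hxU, hxnot⟩
          rw [mem_Ioo, not_and_or, not_lt, not_lt] at hxnot
          simp only [mem_insert_iff, mem_singleton_iff]
          rcases hxnot with h | h
          · left; exact le_antisymm h (hU_sub2 hxU).1
          · right; exact le_antisymm (hU_sub2 hxU).2 h
        · have h0 : Ioo e₁ e₂ \ U = ∅ := by rw [diff_eq_empty]; exact hIoo_sub
          rw [h0]; simp
      have h2 : ∫ t in U, r t = ∫ t in e₁..e₂, r t := by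
        rw [setIntegral_congr_set haeU, ← integral_Ioc_eq_integral_Ioo,
          ← intervalIntegral.integral_of_le h12]
      have h3 : (∫ t in a..e₂, r t) - ∫ t in a..e₁, r t = ∫ t in e₁..e₂, r t :=
        intervalIntegral.integral_interval_sub_left (hr.intervalIntegrable a e₂)
          (hr.intervalIntegrable a e₁)
      have hH1 := hH e₁ he₁ab
      have hH2 := hH e₂ he₂ab
      rw [h1, h2, ← h3]
      have h4 : |(∫ t in a..e₂, r t) - ∫ t in a..e₁, r t| ≤
          |∫ t in a..e₂, r t| + |∫ t in a..e₁, r t| := by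
        have := abs_add_le (∫ t in a..e₂, r t) (-(∫ t in a..e₁, r t))
        simpa [sub_eq_add_neg] using this
      linarith
  -- Assemble
  have hcongr : ∫ t, p t * r t ∂ν = ∫ t, (∫ s, F t s ∂μ) ∂ν := by
    apply integral_congr_ae
    have : ∀ᵐ t ∂ν, t ∈ Icc a b := by rw [hνdef]; exact ae_restrict_mem measurableSet_Icc
    filter_upwards [this] with t ht
    exact hB t ht
  rw [hA, hcongr, hswap]
  have huniv : (μ univ).toReal = P := by
    rw [hμdef, Measure.restrict_apply_univ, Real.volume_Ioc]
    simp [ENNReal.toReal_ofReal P0]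
  have hbound := norm_integral_le_of_norm_le_const (μ := μ)
    (f := fun s => ∫ t, F t s ∂ν) (C := 2 * M)
    (by filter_upwards with s; simpa [Real.norm_eq_abs] using hD s)
  rw [measureReal_def, huniv] at hbound
  simpa [Real.norm_eq_abs] using hbound



lemma abel_bound_s17 (a b M : ℝ) (hab : a ≤ b) (q r : ℝ → ℝ)
    (hq : ContinuousOn q (Icc a b)) (hr : ContinuousOn r (Icc a b))
    (hmono : MonotoneOn q (Icc a b) ∨ AntitoneOn q (Icc a b))
    (hH : ∀ x ∈ Icc a b, |∫ t in a..x, r t| ≤ M) :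
    |∫ t in a..b, q t * r t| ≤ 3 * M * (|q a| + |q b|) := by
  have M0 : 0 ≤ M := by
    have := hH a ⟨le_rfl, hab⟩
    simpa using this
  -- clamp
  set clmp : ℝ → ℝ := fun t => max a (min b t) with hclmpdef
  have hclmpcont : Continuous clmp := continuous_const.max (continuous_const.min continuous_id)
  have hclmpmem : ∀ t, clmp t ∈ Icc a b := fun t =>
    ⟨le_max_left _ _, max_le hab (min_le_left _ _)⟩
  have hclmpeq : ∀ t ∈ Icc a b, clmp t = t := by
    intro t ht
    rw [hclmpdef]
    simp only
    rw [min_eq_right ht.2, max_eq_right ht.1]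
  set Q : ℝ → ℝ := fun t => q (clmp t) with hQdef
  set R : ℝ → ℝ := fun t => r (clmp t) with hRdef
  have hQcont : Continuous Q := hq.comp_continuous hclmpcont hclmpmem
  have hRcont : Continuous R := hr.comp_continuous hclmpcont hclmpmem
  have hQeq : ∀ t ∈ Icc a b, Q t = q t := fun t ht => by rw [hQdef]; simp only; rw [hclmpeq t ht]
  have hReq : ∀ t ∈ Icc a b, R t = r t := fun t ht => by rw [hRdef]; simp only; rw [hclmpeq t ht]
  have hHR : ∀ x ∈ Icc a b, |∫ t in a..x, R t| ≤ M := by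
    intro x hx
    have : ∫ t in a..x, R t = ∫ t in a..x, r t := by
      apply intervalIntegral.integral_congr
      intro t ht
      rw [uIcc_of_le hx.1] at ht
      show R t = r t
      exact hReq t ⟨ht.1, le_trans ht.2 hx.2⟩
    rw [this]
    exact hH x hx
  have hgoal : ∫ t in a..b, q t * r t = ∫ t in a..b, Q t * R t := by
    apply intervalIntegral.integral_congr
    intro t ht
    rw [uIcc_of_le hab] at ht
    show q t * r t = Q t * R t
    rw [hQeq t ht, hReq t ht]
  rw [hgoal]
  have hQa : Q a = q a := hQeq a ⟨le_rfl, hab⟩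
  have hQb : Q b = q b := hQeq b ⟨hab, le_rfl⟩
  have hsplit : ∀ d : ℝ, ∫ t in a..b, Q t * R t = (∫ t in a..b, (Q t - d) * R t) + d * ∫ t in a..b, R t := by
    intro d
    have h1 : IntervalIntegrable (fun t => Q t * R t) volume a b :=
      (hQcont.mul hRcont).intervalIntegrable a b
    have h2 : IntervalIntegrable R volume a b := hRcont.intervalIntegrable a b
    have h3 : IntervalIntegrable (fun t => d * R t) volume a b :=
      (continuous_const.mul hRcont).intervalIntegrable a b
    have : ∫ t in a..b, (Q t - d) * R t = (∫ t in a..b, Q t * R t) - ∫ t in a..b, d * R t := by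
      rw [← intervalIntegral.integral_sub h1 h3]
      congr 1
      funext t
      ring
    rw [this, intervalIntegral.integral_const_mul]
    ring
  have hRb : |∫ t in a..b, R t| ≤ M := hHR b ⟨hab, le_rfl⟩
  rcases hmono with hm | hm
  · -- monotone : use d = q a
    rw [hsplit (q a)]
    have hlc : |∫ t in a..b, (Q t - q a) * R t| ≤ 2 * M * (q b - q a) := by
      apply layercake_bound a b M (q b - q a) hab _ R (hQcont.sub continuous_const) hRcont
      · intro t ht
        simp only [Pi.sub_apply, sub_nonneg, hQeq t ht]
        exact hm ⟨le_rfl, hab⟩ ht ht.1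
      · intro t ht
        simp only [Pi.sub_apply, sub_le_sub_iff_right, hQeq t ht]
        exact hm ht ⟨hab, le_rfl⟩ ht.2
      · intro s x hx y hy z hz hxy hyz hsx hsz
        have : Q x ≤ Q y := by rw [hQeq x hx, hQeq y hy]; exact hm hx hy hxy
        simp only [Pi.sub_apply, sub_lt_sub_iff_right] at hsx hsz ⊢  -- not needed; keep simple
        linarith
      · exact hHR
    have h5 : q b - q a ≤ |q a| + |q b| := by
      have := le_abs_self (q b); have := neg_abs_le (q a); linarith
    calc |(∫ t in a..b, (Q t - q a) * R t) + q a * ∫ t in a..b, R t|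
        ≤ |∫ t in a..b, (Q t - q a) * R t| + |q a| * |∫ t in a..b, R t| := by
          have := abs_add_le (∫ t in a..b, (Q t - q a) * R t) (q a * ∫ t in a..b, R t)
          rw [abs_mul] at this
          exact this
      _ ≤ 2 * M * (|q a| + |q b|) + |q a| * M := by
          have h6 : |q a| * |∫ t in a..b, R t| ≤ |q a| * M :=
            mul_le_mul_of_nonneg_left hRb (abs_nonneg _)
          have h7 : 2 * M * (q b - q a) ≤ 2 * M * (|q a| + |q b|) :=
            mul_le_mul_of_nonneg_left h5 (by linarith)
          linarith
      _ ≤ 3 * M * (|q a| + |q b|) := by nlinarith [abs_nonneg (q a), abs_nonneg (q b)]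
  · -- antitone : use d = q b
    rw [hsplit (q b)]
    have hlc : |∫ t in a..b, (Q t - q b) * R t| ≤ 2 * M * (q a - q b) := by
      apply layercake_bound a b M (q a - q b) hab _ R (hQcont.sub continuous_const) hRcont
      · intro t ht
        simp only [Pi.sub_apply, sub_nonneg, hQeq t ht]
        exact hm ht ⟨hab, le_rfl⟩ ht.2
      · intro t ht
        simp only [Pi.sub_apply, sub_le_sub_iff_right, hQeq t ht]
        exact hm ⟨le_rfl, hab⟩ ht ht.1
      · intro s x hx y hy z hz hxy hyz hsx hsz
        have : Q z ≤ Q y := by rw [hQeq z hz, hQeq y hy]; exact hm hy hz hyz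
        simp only [Pi.sub_apply] at hsx hsz ⊢
        linarith
      · exact hHR
    have h5 : q a - q b ≤ |q a| + |q b| := by
      have := le_abs_self (q a); have := neg_abs_le (q b); linarith
    calc |(∫ t in a..b, (Q t - q b) * R t) + q b * ∫ t in a..b, R t|
        ≤ |∫ t in a..b, (Q t - q b) * R t| + |q b| * |∫ t in a..b, R t| := by
          have := abs_add_le (∫ t in a..b, (Q t - q b) * R t) (q b * ∫ t in a..b, R t)
          rw [abs_mul] at this
          exact this
      _ ≤ 2 * M * (|q a| + |q b|) + |q b| * M := by
          have h6 : |q b| * |∫ t in a..b, R t| ≤ |q b| * M :=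
            mul_le_mul_of_nonneg_left hRb (abs_nonneg _)
          have h7 : 2 * M * (q a - q b) ≤ 2 * M * (|q a| + |q b|) :=
            mul_le_mul_of_nonneg_left h5 (by linarith)
          linarith
      _ ≤ 3 * M * (|q a| + |q b|) := by nlinarith [abs_nonneg (q a), abs_nonneg (q b)]



lemma osc_bound (a b : ℝ) (hab : a ≤ b) (φ φ' q : ℝ → ℝ)
    (hφ : ∀ t ∈ Icc a b, HasDerivAt φ (φ' t) t)
    (hφ'c : ContinuousOn φ' (Icc a b))
    (hq : ContinuousOn q (Icc a b))
    (hmono : MonotoneOn q (Icc a b) ∨ AntitoneOn q (Icc a b)) :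
    ‖∫ t in a..b, ((q t * φ' t : ℝ) : ℂ) * Complex.exp (Complex.I * (φ t : ℝ))‖ ≤
      12 * (|q a| + |q b|) := by
  have hφc : ContinuousOn φ (Icc a b) := fun t ht => (hφ t ht).continuousAt.continuousWithinAt
  set rc : ℝ → ℝ := fun t => Real.cos (φ t) * φ' t with hrc
  set rs : ℝ → ℝ := fun t => Real.sin (φ t) * φ' t with hrs
  have hrccont : ContinuousOn rc (Icc a b) :=
    (Real.continuous_cos.comp_continuousOn hφc).mul hφ'c
  have hrscont : ContinuousOn rs (Icc a b) :=
    (Real.continuous_sin.comp_continuousOn hφc).mul hφ'c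
  -- pointwise decomposition
  have hpt : ∀ t : ℝ, ((q t * φ' t : ℝ) : ℂ) * Complex.exp (Complex.I * (φ t : ℝ)) =
      ((q t * rc t : ℝ) : ℂ) + ((q t * rs t : ℝ) : ℂ) * Complex.I := by
    intro t
    rw [mul_comm Complex.I ((φ t : ℝ) : ℂ), Complex.exp_mul_I, hrc, hrs]
    simp only [Complex.ofReal_mul, Complex.ofReal_cos, Complex.ofReal_sin]
    ring
  -- integrability of the complex pieces
  have hQRc : IntervalIntegrable (fun t => q t * rc t) volume a b := by
    apply ContinuousOn.intervalIntegrable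
    rw [uIcc_of_le hab]
    exact hq.mul hrccont
  have hQRs : IntervalIntegrable (fun t => q t * rs t) volume a b := by
    apply ContinuousOn.intervalIntegrable
    rw [uIcc_of_le hab]
    exact hq.mul hrscont
  have hIc : IntervalIntegrable (fun t => ((q t * rc t : ℝ) : ℂ)) volume a b := by
    apply ContinuousOn.intervalIntegrable
    rw [uIcc_of_le hab]
    exact Complex.continuous_ofReal.comp_continuousOn (hq.mul hrccont)
  have hIs : IntervalIntegrable (fun t => ((q t * rs t : ℝ) : ℂ) * Complex.I) volume a b := by
    apply ContinuousOn.intervalIntegrable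
    rw [uIcc_of_le hab]
    exact (Complex.continuous_ofReal.comp_continuousOn (hq.mul hrscont)).mul continuousOn_const
  have hsplit : ∫ t in a..b, ((q t * φ' t : ℝ) : ℂ) * Complex.exp (Complex.I * (φ t : ℝ)) =
      ((∫ t in a..b, q t * rc t : ℝ) : ℂ) + ((∫ t in a..b, q t * rs t : ℝ) : ℂ) * Complex.I := by
    rw [intervalIntegral.integral_congr (g := fun t => ((q t * rc t : ℝ) : ℂ) +
      ((q t * rs t : ℝ) : ℂ) * Complex.I) (fun t _ => hpt t)]
    rw [intervalIntegral.integral_add hIc hIs, intervalIntegral.integral_mul_const,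
      intervalIntegral.integral_ofReal, intervalIntegral.integral_ofReal]
  -- FTC bounds
  have hHc : ∀ x ∈ Icc a b, |∫ t in a..x, rc t| ≤ 2 := by
    intro x hx
    have hftc : ∫ t in a..x, rc t = Real.sin (φ x) - Real.sin (φ a) := by
      apply intervalIntegral.integral_eq_sub_of_hasDerivAt
      · intro t ht
        rw [uIcc_of_le hx.1] at ht
        exact (Real.hasDerivAt_sin (φ t)).comp t (hφ t ⟨ht.1, le_trans ht.2 hx.2⟩)
      · apply ContinuousOn.intervalIntegrable
        rw [uIcc_of_le hx.1]
        exact hrccont.mono (Icc_subset_Icc le_rfl hx.2)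
    rw [hftc]
    have h1 := Real.neg_one_le_sin (φ x)
    have h2 := Real.sin_le_one (φ x)
    have h3 := Real.neg_one_le_sin (φ a)
    have h4 := Real.sin_le_one (φ a)
    rw [abs_le]; constructor <;> linarith
  have hHs : ∀ x ∈ Icc a b, |∫ t in a..x, rs t| ≤ 2 := by
    intro x hx
    have hftc : ∫ t in a..x, rs t = (-Real.cos (φ x)) - (-Real.cos (φ a)) := by
      apply intervalIntegral.integral_eq_sub_of_hasDerivAt (f := fun t => -Real.cos (φ t))
      · intro t ht
        rw [uIcc_of_le hx.1] at ht
        have := ((Real.hasDerivAt_cos (φ t)).comp t (hφ t ⟨ht.1, le_trans ht.2 hx.2⟩)).neg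
        simp only [neg_mul, neg_neg] at this
        exact this
      · apply ContinuousOn.intervalIntegrable
        rw [uIcc_of_le hx.1]
        exact hrscont.mono (Icc_subset_Icc le_rfl hx.2)
    rw [hftc]
    have h1 := Real.neg_one_le_cos (φ x)
    have h2 := Real.cos_le_one (φ x)
    have h3 := Real.neg_one_le_cos (φ a)
    have h4 := Real.cos_le_one (φ a)
    rw [abs_le]; constructor <;> linarith
  have hac := abel_bound_s17 a b 2 hab q rc hq hrccont hmono hHc
  have has := abel_bound_s17 a b 2 hab q rs hq hrscont hmono hHs
  rw [hsplit]
  calc ‖((∫ t in a..b, q t * rc t : ℝ) : ℂ) + ((∫ t in a..b, q t * rs t : ℝ) : ℂ) * Complex.I‖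
      ≤ ‖((∫ t in a..b, q t * rc t : ℝ) : ℂ)‖ + ‖((∫ t in a..b, q t * rs t : ℝ) : ℂ) * Complex.I‖ :=
        norm_add_le _ _
    _ = |∫ t in a..b, q t * rc t| + |∫ t in a..b, q t * rs t| := by
        rw [norm_mul]
        simp [Complex.norm_real, Real.norm_eq_abs]
    _ ≤ 3 * 2 * (|q a| + |q b|) + 3 * 2 * (|q a| + |q b|) := add_le_add hac has
    _ = 12 * (|q a| + |q b|) := by ring



section
set_option maxHeartbeats 1000000

lemma main_bound
    (C₂ c : ℝ) (f f' f'' : ℝ → ℝ) (hC₂ : 0 < C₂) (hc : C₂ < c)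
    (hf : ∀ t, c ≤ t → HasDerivAt f (f' t) t)
    (hf' : ∀ t, c ≤ t → HasDerivAt f' (f'' t) t)
    (hf''cont : ContinuousOn f'' (Ici c))
    (hf'ne : ∀ t, c ≤ t → f' t ≠ 0)
    (hC2mono : MonotoneOn (fun t => t * (f' t) ^ 2) (Ici c) ∨
      AntitoneOn (fun t => t * (f' t) ^ 2) (Ici c))
    (hC2sign : (∀ t ∈ Ici c, 0 < t * (f' t) ^ 2) ∨ (∀ t ∈ Ici c, t * (f' t) ^ 2 < 0))
    (hC3mono : MonotoneOn (fun t => (f' t) ^ 3 / (f'' t * Real.log (t / C₂))) (Ici c) ∨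
      AntitoneOn (fun t => (f' t) ^ 3 / (f'' t * Real.log (t / C₂))) (Ici c))
    (hC3sign : (∀ t ∈ Ici c, 0 < (f' t) ^ 3 / (f'' t * Real.log (t / C₂))) ∨
      (∀ t ∈ Ici c, (f' t) ^ 3 / (f'' t * Real.log (t / C₂)) < 0))
    (T : ℝ) (hT : c ≤ T) :
    ‖∫ t in c..T, Complex.exp (Complex.I * f t) * (Real.log (t / C₂) : ℂ)‖ ≤
      |Real.log (T / C₂) / f' T| + |Real.log (c / C₂) / f' c|
      + 12 * (|1 / (c * (f' c) ^ 2)| + |1 / (T * (f' T) ^ 2)|)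
      + 12 * (|f'' c * Real.log (c / C₂) / (f' c) ^ 3|
              + |f'' T * Real.log (T / C₂) / (f' T) ^ 3|) := by
  have hc0 : 0 < c := hC₂.trans hc
  have hC₂0 : C₂ ≠ 0 := ne_of_gt hC₂
  have htpos : ∀ t ∈ Ici c, 0 < t := fun t ht => lt_of_lt_of_le hc0 ht
  have hf'cont : ContinuousOn f' (Ici c) :=
    fun t ht => (hf' t ht).continuousAt.continuousWithinAt
  have hfcont : ContinuousOn f (Ici c) :=
    fun t ht => (hf t ht).continuousAt.continuousWithinAt
  set L : ℝ → ℝ := fun t => Real.log (t / C₂) with hLdef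
  set E : ℝ → ℂ := fun t => Complex.exp (Complex.I * (f t : ℝ)) with hEdef
  set w : ℝ → ℝ := fun t => Real.log (t / C₂) / f' t with hwdef
  set w' : ℝ → ℝ := fun t => (1 / t * f' t - Real.log (t / C₂) * f'' t) / (f' t) ^ 2 with hw'def
  set g₁ : ℝ → ℝ := fun t => 1 / (t * (f' t) ^ 2) with hg₁def
  set g₂ : ℝ → ℝ := fun t => f'' t * Real.log (t / C₂) / (f' t) ^ 3 with hg₂def
  set Θ : ℝ → ℂ := fun t => -Complex.I * (((w t : ℝ) : ℂ) * E t) with hΘdef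
  -- continuity facts on Ici c
  have hLc : ContinuousOn L (Ici c) := by
    apply ContinuousOn.log
    · exact (continuous_id.div_const C₂).continuousOn
    · exact fun t ht => ne_of_gt (div_pos (htpos t ht) hC₂)
  have hEc : ContinuousOn E (Ici c) :=
    Complex.continuous_exp.comp_continuousOn
      (continuousOn_const.mul (Complex.continuous_ofReal.comp_continuousOn hfcont))
  have hwc : ContinuousOn w (Ici c) :=
    hLc.div hf'cont (fun t ht => hf'ne t ht)
  have hw'c : ContinuousOn w' (Ici c) := by
    apply ContinuousOn.div
    · exact ((continuousOn_const.div continuousOn_id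
        (fun t ht => ne_of_gt (htpos t ht))).mul hf'cont).sub (hLc.mul hf''cont)
    · exact hf'cont.pow 2
    · exact fun t ht => pow_ne_zero 2 (hf'ne t ht)
  have hg₁c : ContinuousOn g₁ (Ici c) := by
    apply ContinuousOn.div continuousOn_const
    · exact continuousOn_id.mul (hf'cont.pow 2)
    · exact fun t ht => mul_ne_zero (ne_of_gt (htpos t ht)) (pow_ne_zero 2 (hf'ne t ht))
  have hg₂c : ContinuousOn g₂ (Ici c) := by
    apply ContinuousOn.div (hf''cont.mul hLc) (hf'cont.pow 3)
    exact fun t ht => pow_ne_zero 3 (hf'ne t ht)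
  have hsub : Icc c T ⊆ Ici c := fun x hx => hx.1
  -- derivative facts
  have hL' : ∀ t, c ≤ t → HasDerivAt L (1 / t) t := by
    intro t ht
    have h1 : HasDerivAt (fun u => u / C₂) (1 / C₂) t := (hasDerivAt_id t).div_const C₂
    have h2 : t / C₂ ≠ 0 := ne_of_gt (div_pos (htpos t ht) hC₂)
    have h3 := (Real.hasDerivAt_log h2).comp t h1
    have h4 : (t / C₂)⁻¹ * (1 / C₂) = 1 / t := by
      rw [inv_div, div_mul_div_comm, mul_one, mul_comm t C₂, ← div_div, div_self hC₂0]
    rw [h4] at h3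
    exact h3
  have hw' : ∀ t, c ≤ t → HasDerivAt w (w' t) t := by
    intro t ht
    exact (hL' t ht).div (hf' t ht) (hf'ne t ht)
  have hE' : ∀ t, c ≤ t → HasDerivAt E (E t * (Complex.I * ((f' t : ℝ) : ℂ))) t := by
    intro t ht
    exact (((hf t ht).ofReal_comp).const_mul Complex.I).cexp
  have hΘ' : ∀ t, c ≤ t →
      HasDerivAt Θ (E t * ((L t : ℝ) : ℂ) - Complex.I * (((w' t : ℝ) : ℂ) * E t)) t := by
    intro t ht
    have h1 := (((hw' t ht).ofReal_comp).mul (hE' t ht)).const_mul (-Complex.I)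
    have hwf : ((w t : ℝ) : ℂ) * ((f' t : ℝ) : ℂ) = ((L t : ℝ) : ℂ) := by
      rw [← Complex.ofReal_mul]
      norm_cast
      exact div_mul_cancel₀ _ (hf'ne t ht)
    have hI : Complex.I * Complex.I = -1 := Complex.I_mul_I
    have heq : -Complex.I * (((w' t : ℝ) : ℂ) * E t +
        ((w t : ℝ) : ℂ) * (E t * (Complex.I * ((f' t : ℝ) : ℂ)))) =
        E t * ((L t : ℝ) : ℂ) - Complex.I * (((w' t : ℝ) : ℂ) * E t) := by
      rw [← hwf]
      linear_combination (-(((w t : ℝ) : ℂ) * E t * ((f' t : ℝ) : ℂ))) * hI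
    rw [heq] at h1
    exact h1
  -- interval integrability
  have hIEL : IntervalIntegrable (fun t => E t * ((L t : ℝ) : ℂ)) volume c T := by
    apply ContinuousOn.intervalIntegrable
    rw [uIcc_of_le hT]
    exact (hEc.mono hsub).mul ((Complex.continuous_ofReal.comp_continuousOn hLc).mono hsub)
  have hIw'E : IntervalIntegrable (fun t => ((w' t : ℝ) : ℂ) * E t) volume c T := by
    apply ContinuousOn.intervalIntegrable
    rw [uIcc_of_le hT]
    exact ((Complex.continuous_ofReal.comp_continuousOn hw'c).mono hsub).mul (hEc.mono hsub)
  -- FTC identity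
  have key : (∫ t in c..T, E t * ((L t : ℝ) : ℂ)) =
      (Θ T - Θ c) + Complex.I * ∫ t in c..T, ((w' t : ℝ) : ℂ) * E t := by
    have hftc : ∫ t in c..T,
        (E t * ((L t : ℝ) : ℂ) - Complex.I * (((w' t : ℝ) : ℂ) * E t)) = Θ T - Θ c := by
      apply intervalIntegral.integral_eq_sub_of_hasDerivAt
      · intro x hx
        rw [uIcc_of_le hT] at hx
        exact hΘ' x hx.1
      · exact hIEL.sub (hIw'E.const_mul Complex.I)
    rw [intervalIntegral.integral_sub hIEL (hIw'E.const_mul Complex.I),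
      intervalIntegral.integral_const_mul] at hftc
    linear_combination hftc
  -- split of the remainder integral
  have hIg₁ : IntervalIntegrable (fun t => ((g₁ t * f' t : ℝ) : ℂ) * E t) volume c T := by
    apply ContinuousOn.intervalIntegrable
    rw [uIcc_of_le hT]
    exact ((Complex.continuous_ofReal.comp_continuousOn
      ((hg₁c.mul hf'cont).mono hsub))).mul (hEc.mono hsub)
  have hIg₂ : IntervalIntegrable (fun t => ((g₂ t * f' t : ℝ) : ℂ) * E t) volume c T := by
    apply ContinuousOn.intervalIntegrable
    rw [uIcc_of_le hT]
    exact ((Complex.continuous_ofReal.comp_continuousOn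
      ((hg₂c.mul hf'cont).mono hsub))).mul (hEc.mono hsub)
  have hsplit : (∫ t in c..T, ((w' t : ℝ) : ℂ) * E t) =
      (∫ t in c..T, ((g₁ t * f' t : ℝ) : ℂ) * E t)
      - ∫ t in c..T, ((g₂ t * f' t : ℝ) : ℂ) * E t := by
    rw [← intervalIntegral.integral_sub hIg₁ hIg₂]
    apply intervalIntegral.integral_congr
    intro t ht
    rw [uIcc_of_le hT] at ht
    have h2 : f' t ≠ 0 := hf'ne t ht.1
    have h3 : t ≠ 0 := ne_of_gt (htpos t ht.1)
    have h1 : w' t = g₁ t * f' t - g₂ t * f' t := by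
      simp only [hw'def, hg₁def, hg₂def]
      field_simp
    show ((w' t : ℝ) : ℂ) * E t = ((g₁ t * f' t : ℝ) : ℂ) * E t - ((g₂ t * f' t : ℝ) : ℂ) * E t
    rw [h1]
    push_cast
    ring
  -- monotonicity facts
  have hg₁mono : MonotoneOn g₁ (Icc c T) ∨ AntitoneOn g₁ (Icc c T) := by
    have hsign : ∀ t ∈ Ici c, 0 < t * (f' t) ^ 2 := by
      rcases hC2sign with h | h
      · exact h
      · exfalso
        have h1 := h c self_mem_Ici
        have h2 : 0 < (f' c) ^ 2 :=
          lt_of_le_of_ne (sq_nonneg _) (Ne.symm (pow_ne_zero 2 (hf'ne c le_rfl)))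
        nlinarith
    have := one_div_mono_or_anti (k := fun t => t * (f' t) ^ 2) (Or.inl hsign) hC2mono
    rcases this with h | h
    · exact Or.inl (h.mono hsub)
    · exact Or.inr (h.mono hsub)
  have hg₂mono : MonotoneOn g₂ (Icc c T) ∨ AntitoneOn g₂ (Icc c T) := by
    have := one_div_mono_or_anti
      (k := fun t => (f' t) ^ 3 / (f'' t * Real.log (t / C₂))) hC3sign hC3mono
    have heq : (fun t => 1 / ((f' t) ^ 3 / (f'' t * Real.log (t / C₂)))) = g₂ := by
      funext t
      rw [one_div_div, hg₂def]
    rw [heq] at this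
    rcases this with h | h
    · exact Or.inl (h.mono hsub)
    · exact Or.inr (h.mono hsub)
  -- oscillatory bounds
  have hosc₁ : ‖∫ t in c..T, ((g₁ t * f' t : ℝ) : ℂ) * Complex.exp (Complex.I * (f t : ℝ))‖ ≤
      12 * (|g₁ c| + |g₁ T|) :=
    osc_bound c T hT f f' g₁ (fun t ht => hf t ht.1) (hf'cont.mono hsub)
      (hg₁c.mono hsub) hg₁mono
  have hosc₂ : ‖∫ t in c..T, ((g₂ t * f' t : ℝ) : ℂ) * Complex.exp (Complex.I * (f t : ℝ))‖ ≤
      12 * (|g₂ c| + |g₂ T|) :=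
    osc_bound c T hT f f' g₂ (fun t ht => hf t ht.1) (hf'cont.mono hsub)
      (hg₂c.mono hsub) hg₂mono
  -- norms of boundary terms
  have hnormE : ∀ t : ℝ, ‖E t‖ = 1 := by
    intro t
    rw [hEdef]
    simp only
    rw [Complex.norm_exp]
    have : (Complex.I * ((f t : ℝ) : ℂ)).re = 0 := by simp
    rw [this, Real.exp_zero]
  have hΘnorm : ∀ t : ℝ, ‖Θ t‖ = |w t| := by
    intro t
    rw [hΘdef]
    simp only
    rw [norm_mul, norm_mul, norm_neg, Complex.norm_I, one_mul, hnormE, mul_one,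
      Complex.norm_real, Real.norm_eq_abs]
  -- assemble
  rw [key, hsplit]
  have hnormI : ‖Complex.I‖ = 1 := Complex.norm_I
  calc ‖(Θ T - Θ c) + Complex.I * ((∫ t in c..T, ((g₁ t * f' t : ℝ) : ℂ) * E t)
          - ∫ t in c..T, ((g₂ t * f' t : ℝ) : ℂ) * E t)‖
      ≤ ‖Θ T - Θ c‖ + ‖Complex.I * ((∫ t in c..T, ((g₁ t * f' t : ℝ) : ℂ) * E t)
          - ∫ t in c..T, ((g₂ t * f' t : ℝ) : ℂ) * E t)‖ := norm_add_le _ _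
    _ ≤ (‖Θ T‖ + ‖Θ c‖) + (‖∫ t in c..T, ((g₁ t * f' t : ℝ) : ℂ) * E t‖
          + ‖∫ t in c..T, ((g₂ t * f' t : ℝ) : ℂ) * E t‖) := by
        apply add_le_add (norm_sub_le _ _)
        rw [norm_mul, hnormI, one_mul]
        exact norm_sub_le _ _
    _ ≤ (|w T| + |w c|) + (12 * (|g₁ c| + |g₁ T|) + 12 * (|g₂ c| + |g₂ T|)) := by
        rw [hΘnorm, hΘnorm]
        exact add_le_add le_rfl (add_le_add hosc₁ hosc₂)
    _ ≤ _ := by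
        simp only [hwdef, hg₁def, hg₂def]
        apply le_of_eq
        ring
end


theorem S1_is_little_o
    (C₂ c : ℝ) (f f' f'' : ℝ → ℝ) (hC₂ : 0 < C₂) (hc : C₂ < c)
    (hf : ∀ t, c ≤ t → HasDerivAt f (f' t) t)
    (hf' : ∀ t, c ≤ t → HasDerivAt f' (f'' t) t)
    (hf''cont : ContinuousOn f'' (Ici c))
    (hf'ne : ∀ t, c ≤ t → f' t ≠ 0)
    (hC4 : (fun T : ℝ => 1 / f' T) =o[atTop] (fun T : ℝ => T))
    (hC5 : (fun T : ℝ => f'' T / (f' T) ^ 3) =o[atTop] (fun T : ℝ => T))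
    (hC6 : (fun T : ℝ => ∫ t in c..T, |f' t| * Real.log t)
      =o[atTop] (fun T : ℝ => T * Real.log T))
    (hC2mono : MonotoneOn (fun t => t * (f' t) ^ 2) (Ici c) ∨
      AntitoneOn (fun t => t * (f' t) ^ 2) (Ici c))
    (hC2sign : (∀ t ∈ Ici c, 0 < t * (f' t) ^ 2) ∨ (∀ t ∈ Ici c, t * (f' t) ^ 2 < 0))
    (hC3mono : MonotoneOn (fun t => (f' t) ^ 3 / (f'' t * Real.log (t / C₂))) (Ici c) ∨
      AntitoneOn (fun t => (f' t) ^ 3 / (f'' t * Real.log (t / C₂))) (Ici c))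
    (hC3sign : (∀ t ∈ Ici c, 0 < (f' t) ^ 3 / (f'' t * Real.log (t / C₂))) ∨
      (∀ t ∈ Ici c, (f' t) ^ 3 / (f'' t * Real.log (t / C₂)) < 0)) :
    Tendsto (fun T : ℝ => (1 / ((T * Real.log T : ℝ) : ℂ)) *
        ∫ t in c..T, Complex.exp (Complex.I * f t) * (Real.log (t / C₂) : ℂ))
      atTop (nhds 0) := by
  have hc0 : 0 < c := hC₂.trans hc
  set S : ℝ → ℂ := fun T => ∫ t in c..T,
    Complex.exp (Complex.I * f t) * (Real.log (t / C₂) : ℂ) with hSdef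
  set A : ℝ → ℝ := fun T => |Real.log (T / C₂) / f' T| + |Real.log (c / C₂) / f' c|
      + 12 * (|1 / (c * (f' c) ^ 2)| + |1 / (T * (f' T) ^ 2)|)
      + 12 * (|f'' c * Real.log (c / C₂) / (f' c) ^ 3|
              + |f'' T * Real.log (T / C₂) / (f' T) ^ 3|) with hAdef
  have hbd : ∀ᶠ T in atTop, ‖S T‖ ≤ A T := by
    filter_upwards [eventually_ge_atTop c] with T hT
    exact main_bound C₂ c f f' f'' hC₂ hc hf hf' hf''cont hf'ne hC2mono hC2sign hC3mono hC3sign T hT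
  -- T log T → ∞
  have hTlog : Tendsto (fun T : ℝ => T * Real.log T) atTop atTop :=
    tendsto_id.atTop_mul_atTop₀ Real.tendsto_log_atTop
  have hconst : ∀ k : ℝ, (fun _ : ℝ => k) =o[atTop] (fun T => T * Real.log T) := by
    intro k
    refine isLittleO_const_left.2 (Or.inr ?_)
    have := tendsto_abs_atTop_atTop.comp hTlog
    simpa [Function.comp_def, Real.norm_eq_abs] using this
  have hone : (fun _ : ℝ => (1:ℝ)) =o[atTop] Real.log := by
    refine isLittleO_const_left.2 (Or.inr ?_)
    have := tendsto_abs_atTop_atTop.comp Real.tendsto_log_atTop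
    simpa [Function.comp_def, Real.norm_eq_abs] using this
  -- log(T/C₂) = O(log T)
  have hLbigO : (fun T : ℝ => Real.log (T / C₂)) =O[atTop] Real.log := by
    rw [isBigO_iff]
    refine ⟨2, ?_⟩
    filter_upwards [eventually_ge_atTop (max 1 (Real.exp |Real.log C₂|))] with T hT
    have hT1 : (1:ℝ) ≤ T := le_trans (le_max_left _ _) hT
    have hT0 : (0:ℝ) < T := lt_of_lt_of_le one_pos hT1
    have hexp : Real.exp |Real.log C₂| ≤ T := le_trans (le_max_right _ _) hT
    have hlogT : |Real.log C₂| ≤ Real.log T := by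
      calc |Real.log C₂| = Real.log (Real.exp |Real.log C₂|) := (Real.log_exp _).symm
        _ ≤ Real.log T := Real.log_le_log (Real.exp_pos _) hexp
    have hlogT0 : 0 ≤ Real.log T := Real.log_nonneg hT1
    rw [Real.log_div (ne_of_gt hT0) (ne_of_gt hC₂), Real.norm_eq_abs, Real.norm_eq_abs]
    have h1 : |Real.log T - Real.log C₂| ≤ |Real.log T| + |Real.log C₂| := by
      have := abs_add_le (Real.log T) (-Real.log C₂)
      simpa [sub_eq_add_neg] using this
    rw [abs_of_nonneg hlogT0] at h1 ⊢
    linarith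
  -- piece 1 : |log(T/C₂)/f' T|
  have hp1 : (fun T : ℝ => Real.log (T / C₂) / f' T) =o[atTop] (fun T => T * Real.log T) := by
    have h := hC4.mul_isBigO hLbigO
    have heq : (fun T : ℝ => 1 / f' T * Real.log (T / C₂)) =
        fun T => Real.log (T / C₂) / f' T := by
      funext T
      rw [one_div, inv_mul_eq_div]
    rwa [heq] at h
  -- piece 2 : |f'' T log(T/C₂)/f' T ^3|
  have hp2 : (fun T : ℝ => f'' T * Real.log (T / C₂) / (f' T) ^ 3) =o[atTop]
      (fun T => T * Real.log T) := by
    have h := hC5.mul_isBigO hLbigO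
    have heq : (fun T : ℝ => f'' T / (f' T) ^ 3 * Real.log (T / C₂)) =
        fun T => f'' T * Real.log (T / C₂) / (f' T) ^ 3 := by
      funext T
      rw [div_mul_eq_mul_div]
    rwa [heq] at h
  -- piece 3 : |1/(T f' T^2)|
  have hTlittle : (fun T : ℝ => T) =o[atTop] (fun T => T * Real.log T) := by
    have h := (isBigO_refl (fun T : ℝ => T) atTop).mul_isLittleO hone
    have heq : (fun T : ℝ => T * (1:ℝ)) = fun T : ℝ => T := by
      funext T; rw [mul_one]
    rwa [heq] at h
  have hp3 : (fun T : ℝ => 1 / (T * (f' T) ^ 2)) =o[atTop] (fun T => T * Real.log T) := by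
    have h2 := hC4.mul hC4
    have h3 := h2.mul_isBigO (isBigO_refl (fun T : ℝ => 1 / T) atTop)
    have h4 : (fun T : ℝ => T * T * (1 / T)) =O[atTop] (fun T : ℝ => T) := by
      rw [isBigO_iff]
      refine ⟨1, ?_⟩
      filter_upwards [eventually_gt_atTop (0:ℝ)] with T hT0
      have : T * T * (1 / T) = T := by field_simp
      rw [this, one_mul]
    have h5 := (h3.trans_isBigO h4).trans hTlittle
    have heq : (fun T : ℝ => 1 / f' T * (1 / f' T) * (1 / T)) =
        fun T : ℝ => 1 / (T * (f' T) ^ 2) := by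
      funext T
      simp only [one_div, sq, mul_inv]
      ring
    rwa [heq] at h5
  -- combine
  have hA : A =o[atTop] (fun T => T * Real.log T) := by
    rw [hAdef]
    refine IsLittleO.add (IsLittleO.add (IsLittleO.add hp1.abs_left ?k0) ?m1) ?m2
    · exact hconst _
    · exact ((hconst _).add hp3.abs_left).const_mul_left 12
    · exact ((hconst _).add hp2.abs_left).const_mul_left 12
  have hnorm : (fun T => ‖S T‖) =o[atTop] (fun T => T * Real.log T) := by
    rw [isLittleO_iff]
    intro ε hε
    filter_upwards [hbd, hA.def hε] with T h1 h2
    rw [Real.norm_eq_abs, abs_norm]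
    refine le_trans h1 (le_trans (le_abs_self _) ?_)
    simpa [Real.norm_eq_abs] using h2
  have htend := hnorm.tendsto_div_nhds_zero
  apply squeeze_zero_norm' (a := fun T => ‖S T‖ / (T * Real.log T)) ?_ htend
  filter_upwards [eventually_ge_atTop (max 2 c)] with T hT
  have hT2 : (2:ℝ) ≤ T := le_trans (le_max_left _ _) hT
  have hT0 : (0:ℝ) < T := lt_of_lt_of_le two_pos hT2
  have hlogpos : 0 < Real.log T := Real.log_pos (by linarith)
  have hpos : 0 < T * Real.log T := mul_pos hT0 hlogpos
  have h1 : ‖(1 / ((T * Real.log T : ℝ) : ℂ))‖ = 1 / (T * Real.log T) := by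
    rw [norm_div, norm_one, Complex.norm_real, Real.norm_eq_abs, abs_of_pos hpos]
  rw [norm_mul, h1, one_div_mul_eq_div]
end
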